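/- arXiv:2511.21480 — 5 statements merged into one kernel-verified Lean document; each statement's English description precedes it below -/
import Mathlib

section
/- There exists a constant C such that, as ε → 0⁺, ∫₀¹ log((1+√(1−u²))/u) · du/(ε+u) = (1/2)·log²(1/ε) + log(2)·log(1/ε) + C + o(1). Moreover one can take C = π²/6 + ∫₀¹ log((1+√(1−u²))/2) · du/u. -/
open Real MeasureTheory Filter Set

-- log is interval integrable on [0,1]
lemma aux_log_int01 : IntervalIntegrable Real.log volume 0 1 := by
  rw [intervalIntegrable_iff_integrableOn_Ioc_of_le zero_le_one]
  apply MeasureTheory.integrableOn_Ioc_of_intervalIntegral_norm_bounded_left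
    (a := fun n : ℕ => (1:ℝ)/(n+1)) (l := atTop) (I := 1)
  · intro n
    have hn : (0:ℝ) < 1/(n+1) := by positivity
    have hn1 : (1:ℝ)/(n+1) ≤ 1 := by
      rw [div_le_one (by positivity)]; linarith [Nat.cast_nonneg (α := ℝ) n]
    have : IntervalIntegrable Real.log volume (1/(n+1)) 1 := by
      apply intervalIntegral.intervalIntegrable_log
      rw [Set.uIcc_of_le hn1]
      intro h; exact absurd h.1 (by linarith)
    rwa [intervalIntegrable_iff_integrableOn_Ioc_of_le hn1] at this
  · exact tendsto_one_div_add_atTop_nhds_zero_nat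
  · filter_upwards with n
    have hn : (0:ℝ) < 1/(n+1) := by positivity
    have hn1 : (1:ℝ)/(n+1) ≤ 1 := by
      rw [div_le_one (by positivity)]; linarith [Nat.cast_nonneg (α := ℝ) n]
    set a : ℝ := 1/(n+1)
    have h1 : ∫ x in Set.Ioc a 1, ‖Real.log x‖ = ∫ x in Set.Ioc a 1, -Real.log x := by
      apply setIntegral_congr_fun measurableSet_Ioc
      intro x hx
      show ‖Real.log x‖ = -Real.log x
      rw [Real.norm_eq_abs, abs_of_nonpos (Real.log_nonpos (by linarith [hx.1]) hx.2)]
    rw [h1, ← intervalIntegral.integral_of_le hn1]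
    rw [intervalIntegral.integral_neg]
    rw [integral_log]
    have := Real.log_nonpos (le_of_lt hn) hn1
    have h2 : a * Real.log a ≤ 0 := mul_nonpos_of_nonneg_of_nonpos hn.le this
    simp only [Real.log_one]
    nlinarith

lemma aux_log_intT {T : ℝ} (hT : 0 < T) : IntervalIntegrable Real.log volume 0 T := by
  rcases le_total T 1 with h | h
  · apply aux_log_int01.mono_set
    rw [Set.uIcc_of_le hT.le, Set.uIcc_of_le zero_le_one]
    exact Set.Icc_subset_Icc le_rfl h
  · exact aux_log_int01.trans (intervalIntegral.intervalIntegrable_log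
      (by rw [Set.uIcc_of_le h]; rintro ⟨h1, -⟩; norm_num at h1))

lemma aux_basel : HasSum (fun n : ℕ => 1/((n:ℝ)+1)^2) (π^2/6) := by
  have h := hasSum_zeta_two
  have h2 : HasSum (fun n : ℕ => (1:ℝ)/((n+1:ℕ):ℝ)^2) (π^2/6) := by
    rw [(hasSum_nat_add_iff (f := fun n : ℕ => (1:ℝ)/(n:ℝ)^2) 1)]
    simpa using h
  simpa using h2

lemma aux_log_one_sub_int : IntegrableOn (fun t : ℝ => Real.log (1-t)) (Set.Ioo 0 1) volume := by
  have := aux_log_int01.comp_sub_left 1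
  simp only [sub_self, sub_zero] at this
  replace this := this.symm
  rw [intervalIntegrable_iff_integrableOn_Ioc_of_le zero_le_one] at this
  exact this.mono_set Set.Ioo_subset_Ioc_self

lemma aux_dilog_integrable :
    IntegrableOn (fun t : ℝ => -Real.log (1-t)/t) (Set.Ioo 0 1) volume := by
  have hmeas : AEStronglyMeasurable (fun t : ℝ => -Real.log (1-t)/t)
      (volume.restrict (Set.Ioo 0 1)) := by
    apply ContinuousOn.aestronglyMeasurable _ measurableSet_Ioo
    apply ContinuousOn.div
    · apply ContinuousOn.neg
      apply ContinuousOn.log (by fun_prop)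
      intro t ht; simp only [Set.mem_Ioo] at ht; intro hc; nlinarith [ht.1, ht.2]
    · exact continuousOn_id
    · intro t ht; exact ne_of_gt ht.1
  apply Integrable.mono' (g := fun t => 2 + 2*|Real.log (1-t)|)
  · exact (integrableOn_const (by simp)).add
      ((aux_log_one_sub_int.abs).const_mul 2)
  · exact hmeas
  · rw [ae_restrict_iff' measurableSet_Ioo]
    refine ae_of_all _ fun t ht => ?_
    obtain ⟨ht0, ht1⟩ := ht
    have hL : 0 ≤ -Real.log (1-t) := by
      rw [neg_nonneg]; exact Real.log_nonpos (by linarith) (by linarith)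
    rw [Real.norm_eq_abs, abs_div, abs_of_nonneg hL, abs_of_pos ht0]
    have habs : |Real.log (1-t)| = -Real.log (1-t) := abs_of_nonpos (by linarith)
    rw [habs]
    rcases le_total t (1/2) with hc | hc
    · have hlog : -Real.log (1-t) ≤ t/(1-t) := by
        have h1t : (0:ℝ) < 1 - t := by linarith
        have := Real.log_le_sub_one_of_pos (x := (1-t)⁻¹) (inv_pos.mpr h1t)
        rw [Real.log_inv] at this
        have he : (1-t)⁻¹ - 1 = t/(1-t) := by field_simp; ring
        linarith [he ▸ this]
      have h2 : t/(1-t) ≤ 2*t := by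
        rw [div_le_iff₀ (by linarith)]; nlinarith
      have : -Real.log (1-t) / t ≤ 2 := by
        rw [div_le_iff₀ ht0]; linarith
      linarith
    · have : -Real.log (1-t)/t ≤ 2*(-Real.log (1-t)) := by
        rw [div_le_iff₀ ht0]; nlinarith
      linarith

lemma aux_dilog_value :
    ∫ t in Set.Ioo (0:ℝ) 1, -Real.log (1-t)/t = π^2/6 := by
  have hint : ∀ n : ℕ, Integrable (fun t : ℝ => t^n/(n+1))
      (volume.restrict (Set.Ioo 0 1)) := fun n =>
    (((continuous_pow n).div_const _).integrableOn_Icc (a := 0) (b := 1)).mono_set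
      Set.Ioo_subset_Icc_self
  have hval : ∀ n : ℕ, ∫ t in Set.Ioo (0:ℝ) 1, t^n/(n+1) = 1/((n:ℝ)+1)^2 := by
    intro n
    rw [← MeasureTheory.integral_Ioc_eq_integral_Ioo, ← intervalIntegral.integral_of_le zero_le_one]
    rw [intervalIntegral.integral_div, integral_pow]
    push_cast
    field_simp
    ring
  have hnorm : ∀ n : ℕ, ∫ t in Set.Ioo (0:ℝ) 1, ‖t^n/(n+1)‖ = 1/((n:ℝ)+1)^2 := by
    intro n
    rw [← hval n]
    apply setIntegral_congr_fun measurableSet_Ioo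
    intro t ht
    show ‖t^n/(n+1)‖ = t^n/(n+1)
    rw [Real.norm_eq_abs, abs_of_nonneg (div_nonneg (pow_nonneg ht.1.le n) (by positivity))]
  have hsum : Summable (fun n : ℕ => ∫ t in Set.Ioo (0:ℝ) 1, ‖t^n/(n+1)‖) := by
    simp only [hnorm]; exact aux_basel.summable
  have key := MeasureTheory.integral_tsum_of_summable_integral_norm hint hsum
  have h1 : ∑' n : ℕ, ∫ t in Set.Ioo (0:ℝ) 1, t^n/(n+1) = π^2/6 := by
    simp only [hval]; exact aux_basel.tsum_eq
  have h2 : ∫ t in Set.Ioo (0:ℝ) 1, (∑' n : ℕ, t^n/(n+1)) =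
      ∫ t in Set.Ioo (0:ℝ) 1, -Real.log (1-t)/t := by
    apply setIntegral_congr_fun measurableSet_Ioo
    intro t ht
    obtain ⟨ht0, ht1⟩ := ht
    have habs : |t| < 1 := by rw [abs_of_pos ht0]; exact ht1
    have hls := Real.hasSum_pow_div_log_of_abs_lt_one habs
    have := (hls.mul_left t⁻¹)
    have heq : ∀ n : ℕ, t⁻¹ * (t^(n+1)/(n+1)) = t^n/((n:ℝ)+1) := by
      intro n
      rw [pow_succ]
      field_simp
    rw [show (fun n : ℕ => t⁻¹ * (t^(n+1)/(↑n+1))) = (fun n : ℕ => t^n/((n:ℝ)+1))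
      from funext heq] at this
    show (∑' n : ℕ, t^n/((n:ℝ)+1)) = -Real.log (1-t)/t
    rw [this.tsum_eq]
    field_simp
  rw [← h2, ← key, h1]

section CoV

lemma aux_image : (fun x : ℝ => (1+x)⁻¹) '' (Set.Ioi 0) = Set.Ioo 0 1 := by
  ext t
  simp only [Set.mem_image, Set.mem_Ioi, Set.mem_Ioo]
  constructor
  · rintro ⟨x, hx, rfl⟩
    constructor
    · positivity
    · rw [inv_lt_one_iff₀]; right; linarith
  · rintro ⟨h0, h1⟩
    refine ⟨1/t - 1, by rw [lt_sub_iff_add_lt, zero_add, lt_div_iff₀ h0, one_mul]; exact h1, ?_⟩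
    have : 1 + (1/t - 1) = 1/t := by ring
    rw [this, one_div, inv_inv]

lemma aux_deriv : ∀ x ∈ Set.Ioi (0:ℝ), HasDerivWithinAt (fun x : ℝ => (1+x)⁻¹)
    (-1/(1+x)^2) (Set.Ioi 0) x := by
  intro x hx
  have hx0 : (0:ℝ) < x := hx
  have h1x : (1+x) ≠ 0 := by positivity
  have := ((hasDerivAt_id x).const_add 1).inv h1x
  exact this.hasDerivWithinAt

lemma aux_inj : Set.InjOn (fun x : ℝ => (1+x)⁻¹) (Set.Ioi 0) := by
  intro a ha b hb hab
  simp only at hab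
  have := inv_injective hab
  linarith [this]

lemma aux_eqon : ∀ x ∈ Set.Ioi (0:ℝ),
    |(-1/(1+x)^2)| • (-Real.log (1-(1+x)⁻¹)/(1+x)⁻¹) = Real.log ((1+x)/x)/(1+x) := by
  intro x hx
  have hx0 : (0:ℝ) < x := hx
  have h1x : (0:ℝ) < 1+x := by linarith
  have habs : |(-1/(1+x)^2)| = 1/(1+x)^2 := by
    rw [abs_div, abs_neg, abs_one, abs_of_pos (by positivity)]
  have harg : 1-(1+x)⁻¹ = x/(1+x) := by field_simp; ring
  rw [habs, harg, smul_eq_mul]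
  rw [Real.log_div hx0.ne' h1x.ne', Real.log_div h1x.ne' hx0.ne']
  field_simp
  ring

lemma aux_h_int : IntegrableOn (fun x : ℝ => Real.log ((1+x)/x)/(1+x)) (Set.Ioi 0) volume := by
  have := (integrableOn_image_iff_integrableOn_abs_deriv_smul measurableSet_Ioi
    aux_deriv aux_inj (fun t => -Real.log (1-t)/t)).mp (by rw [aux_image]; exact aux_dilog_integrable)
  exact (this.congr_fun aux_eqon measurableSet_Ioi)

lemma aux_h_value : ∫ x in Set.Ioi (0:ℝ), Real.log ((1+x)/x)/(1+x) = π^2/6 := by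
  have := integral_image_eq_integral_abs_deriv_smul measurableSet_Ioi
    aux_deriv aux_inj (fun t => -Real.log (1-t)/t)
  rw [aux_image, aux_dilog_value] at this
  rw [← setIntegral_congr_fun measurableSet_Ioi aux_eqon, ← this]

end CoV

lemma aux_tendsto_I : Tendsto (fun T : ℝ => ∫ x in (0:ℝ)..T, Real.log ((1+x)/x)/(1+x))
    atTop (nhds (π^2/6)) := by
  have := MeasureTheory.intervalIntegral_tendsto_integral_Ioi 0 aux_h_int tendsto_id
  rwa [aux_h_value] at this

lemma aux_log_sq {T : ℝ} (hT : 0 < T) :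
    ∫ x in (0:ℝ)..T, Real.log (1+x)/(1+x) = (Real.log (1+T))^2/2 := by
  have h := intervalIntegral.integral_eq_sub_of_hasDerivAt
    (f := fun x : ℝ => (Real.log (1+x))^2/2)
    (f' := fun x : ℝ => Real.log (1+x)/(1+x)) (a := 0) (b := T) ?_ ?_
  · rw [h]; simp
  · intro x hx
    rw [Set.uIcc_of_le hT.le] at hx
    have h1x : (0:ℝ) < 1 + x := by linarith [hx.1]
    have hl : HasDerivAt (fun x : ℝ => Real.log (1+x)) (1/(1+x)) x := by
      simpa using (((hasDerivAt_id x).const_add 1).log h1x.ne')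
    have := (hl.pow 2).div_const 2
    refine this.congr_deriv ?_
    field_simp
    ring
  · apply ContinuousOn.intervalIntegrable
    apply ContinuousOn.div
    · apply ContinuousOn.log (by fun_prop)
      intro x hx
      rw [Set.uIcc_of_le hT.le] at hx
      have : (0:ℝ) < 1 + x := by linarith [hx.1]
      exact this.ne'
    · fun_prop
    · intro x hx
      rw [Set.uIcc_of_le hT.le] at hx
      have : (0:ℝ) < 1 + x := by linarith [hx.1]
      exact this.ne'

lemma aux_int_inv_eps {ε : ℝ} (hε : 0 < ε) :
    ∫ u in (0:ℝ)..1, (ε+u)⁻¹ = Real.log (1+ε) - Real.log ε := by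
  rw [intervalIntegral.integral_comp_add_left (fun x => x⁻¹) ε]
  simp only [add_zero]
  rw [integral_inv (by
    rw [Set.uIcc_of_le (by linarith : ε ≤ ε + 1)]
    rintro ⟨h1, -⟩
    linarith)]
  rw [Real.log_div (by linarith) hε.ne']
  ring_nf

lemma aux_int_inv_T {T : ℝ} (hT : 0 < T) :
    ∫ x in (0:ℝ)..T, (1+x)⁻¹ = Real.log (1+T) := by
  rw [intervalIntegral.integral_comp_add_left (fun x => x⁻¹) 1]
  simp only [add_zero]
  rw [integral_inv (by
    rw [Set.uIcc_of_le (by linarith : (1:ℝ) ≤ 1 + T)]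
    rintro ⟨h1, -⟩
    linarith)]
  simp

lemma aux_gbound : ∀ u : ℝ, u ∈ Set.Ioc (0:ℝ) 1 →
    |Real.log ((1+Real.sqrt (1-u^2))/2)| ≤ u^2 := by
  intro u hu
  obtain ⟨hu0, hu1⟩ := hu
  set s := Real.sqrt (1-u^2) with hs
  have hs0 : 0 ≤ s := Real.sqrt_nonneg _
  have hs1 : s ≤ 1 := Real.sqrt_le_one.mpr (by nlinarith)
  have hsl : 1 - u^2 ≤ s := by
    have h := Real.sqrt_le_sqrt (show (1-u^2)^2 ≤ 1-u^2 by nlinarith [mul_nonneg (show (0:ℝ) ≤ 1-u^2 by nlinarith) (sq_nonneg u)])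
    rwa [Real.sqrt_sq (by nlinarith)] at h
  have hup : Real.log ((1+s)/2) ≤ 0 :=
    Real.log_nonpos (by positivity) (by linarith)
  have hlow : -u^2 ≤ Real.log ((1+s)/2) := by
    have h1 : 1/(1+u^2) ≤ (1+s)/2 := by
      rw [div_le_div_iff₀ (by positivity) (by norm_num)]
      nlinarith
    have h2 : Real.log (1/(1+u^2)) ≤ Real.log ((1+s)/2) :=
      Real.log_le_log (by positivity) h1
    have h3 : Real.log (1/(1+u^2)) = -Real.log (1+u^2) := by
      rw [one_div, Real.log_inv]
    have h4 : Real.log (1+u^2) ≤ u^2 := by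
      have := Real.log_le_sub_one_of_pos (x := 1+u^2) (by positivity)
      linarith
    linarith
  rw [abs_le]
  constructor <;> nlinarith

lemma aux_g_contOn {ε : ℝ} (hε : 0 ≤ ε) : ContinuousOn
    (fun u : ℝ => Real.log ((1+Real.sqrt (1-u^2))/2)/(ε+u)) (Set.Ioc 0 1) := by
  apply ContinuousOn.div
  · apply ContinuousOn.log
    · fun_prop
    · intro u _
      have : (0:ℝ) < (1+Real.sqrt (1-u^2))/2 := by positivity
      exact this.ne'
  · fun_prop
  · intro u hu
    have : (0:ℝ) < ε + u := by linarith [hu.1]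
    exact this.ne'

lemma aux_dct : Tendsto
    (fun ε : ℝ => ∫ u in Set.Ioc (0:ℝ) 1, Real.log ((1+Real.sqrt (1-u^2))/2)/(ε+u))
    (nhdsWithin 0 (Set.Ioi 0))
    (nhds (∫ u in Set.Ioc (0:ℝ) 1, Real.log ((1+Real.sqrt (1-u^2))/2)/u)) := by
  have h0 : ∫ u in Set.Ioc (0:ℝ) 1, Real.log ((1+Real.sqrt (1-u^2))/2)/u
      = ∫ u in Set.Ioc (0:ℝ) 1, Real.log ((1+Real.sqrt (1-u^2))/2)/(0+u) := by
    simp only [zero_add]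
  rw [h0]
  apply MeasureTheory.tendsto_integral_filter_of_dominated_convergence
    (bound := fun _ => (1:ℝ))
  · filter_upwards [self_mem_nhdsWithin] with ε hε
    exact (aux_g_contOn (le_of_lt hε)).aestronglyMeasurable measurableSet_Ioc
  · filter_upwards [self_mem_nhdsWithin] with ε hε
    rw [ae_restrict_iff' measurableSet_Ioc]
    refine ae_of_all _ fun u hu => ?_
    obtain ⟨hu0, hu1⟩ := hu
    have hεu : (0:ℝ) < ε + u := by have : (0:ℝ) < ε := hε; linarith
    rw [Real.norm_eq_abs, abs_div, abs_of_pos hεu]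
    have hb := aux_gbound u ⟨hu0, hu1⟩
    have h1 : |Real.log ((1+Real.sqrt (1-u^2))/2)|/(ε+u) ≤ u^2/u := by
      apply div_le_div₀ (sq_nonneg u) hb hu0
      have : (0:ℝ) < ε := hε
      linarith
    have h2 : u^2/u = u := by
      rw [sq]; field_simp
    linarith [h1, h2 ▸ h1, hu1]
  · rw [MeasureTheory.integrable_const_iff]
    right
    infer_instance
  · rw [ae_restrict_iff' measurableSet_Ioc]
    refine ae_of_all _ fun u hu => ?_
    apply Tendsto.div tendsto_const_nhds
    · have : Tendsto (fun ε : ℝ => ε + u) (nhds 0) (nhds (0+u)) :=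
        (continuous_id.add continuous_const).tendsto 0
      exact this.mono_left nhdsWithin_le_nhds
    · simp only [zero_add]; exact hu.1.ne'

lemma aux_neglog_int {T : ℝ} (hT : 0 < T) :
    IntervalIntegrable (fun x : ℝ => (-Real.log x)/(1+x)) volume 0 T := by
  have hfe : (fun x : ℝ => (-Real.log x)/(1+x)) = (fun x : ℝ => Real.log x * (-(1+x)⁻¹)) := by
    funext x; ring
  rw [hfe]
  apply (aux_log_intT hT).mul_continuousOn
  apply ContinuousOn.neg
  apply ContinuousOn.inv₀ (by fun_prop)
  intro x hx
  rw [Set.uIcc_of_le hT.le] at hx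
  have : (0:ℝ) < 1+x := by linarith [hx.1]
  exact this.ne'

lemma aux_cont_int {T c : ℝ} (hT : 0 < T) :
    IntervalIntegrable (fun x : ℝ => c * (1+x)⁻¹) volume 0 T := by
  apply ContinuousOn.intervalIntegrable
  apply ContinuousOn.mul continuousOn_const
  apply ContinuousOn.inv₀ (by fun_prop)
  intro x hx
  rw [Set.uIcc_of_le hT.le] at hx
  have : (0:ℝ) < 1+x := by linarith [hx.1]
  exact this.ne'

lemma aux_logdiv_int {T : ℝ} (hT : 0 < T) :
    IntervalIntegrable (fun x : ℝ => Real.log (1+x)/(1+x)) volume 0 T := by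
  apply ContinuousOn.intervalIntegrable
  apply ContinuousOn.div
  · apply ContinuousOn.log (by fun_prop)
    intro x hx
    rw [Set.uIcc_of_le hT.le] at hx
    have : (0:ℝ) < 1+x := by linarith [hx.1]
    exact this.ne'
  · fun_prop
  · intro x hx
    rw [Set.uIcc_of_le hT.le] at hx
    have : (0:ℝ) < 1+x := by linarith [hx.1]
    exact this.ne'

lemma aux_neglog_val {T : ℝ} (hT : 0 < T) :
    ∫ x in (0:ℝ)..T, (-Real.log x)/(1+x) =
      (∫ x in (0:ℝ)..T, Real.log ((1+x)/x)/(1+x)) - (Real.log (1+T))^2/2 := by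
  have hI : ∫ x in (0:ℝ)..T, Real.log ((1+x)/x)/(1+x) =
      ∫ x in (0:ℝ)..T, (Real.log (1+x)/(1+x) + (-Real.log x)/(1+x)) := by
    rw [intervalIntegral.integral_of_le hT.le, intervalIntegral.integral_of_le hT.le]
    apply setIntegral_congr_fun measurableSet_Ioc
    intro x hx
    have hx0 : (0:ℝ) < x := hx.1
    have h1x : (0:ℝ) < 1+x := by linarith
    show Real.log ((1+x)/x)/(1+x) = Real.log (1+x)/(1+x) + (-Real.log x)/(1+x)
    rw [Real.log_div h1x.ne' hx0.ne']
    ring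
  rw [hI, intervalIntegral.integral_add (aux_logdiv_int hT) (aux_neglog_int hT),
    aux_log_sq hT]
  ring

lemma aux_J {ε : ℝ} (hε : 0 < ε) :
    ∫ u in Set.Ioc (0:ℝ) 1, (-Real.log u)/(ε+u) =
      (-Real.log ε) * Real.log (1+1/ε) +
      ((∫ x in (0:ℝ)..(1/ε), Real.log ((1+x)/x)/(1+x)) - (Real.log (1+1/ε))^2/2) := by
  have hT : (0:ℝ) < 1/ε := by positivity
  have A := intervalIntegral.integral_comp_mul_left
    (f := fun u : ℝ => (-Real.log u)/(ε+u)) (c := ε) (a := 0) (b := 1/ε) hε.ne'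
  beta_reduce at A
  rw [mul_zero, mul_one_div_cancel hε.ne', smul_eq_mul] at A
  -- A : ∫ x in 0..1/ε, (-log (ε*x))/(ε+ε*x) = ε⁻¹ * ∫ u in 0..1, (-log u)/(ε+u)
  have hX2 : ∫ x in (0:ℝ)..(1/ε), (-Real.log (ε*x))/(ε+ε*x) =
      ε⁻¹ * ∫ x in (0:ℝ)..(1/ε), ((-Real.log ε) * (1+x)⁻¹ + (-Real.log x)/(1+x)) := by
    rw [← intervalIntegral.integral_const_mul]
    rw [intervalIntegral.integral_of_le hT.le, intervalIntegral.integral_of_le hT.le]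
    apply setIntegral_congr_fun measurableSet_Ioc
    intro x hx
    have hx0 : (0:ℝ) < x := hx.1
    have h1x : (0:ℝ) < 1+x := by linarith
    show (-Real.log (ε*x))/(ε+ε*x) = ε⁻¹ * ((-Real.log ε) * (1+x)⁻¹ + (-Real.log x)/(1+x))
    rw [Real.log_mul hε.ne' hx0.ne']
    have hεx : ε + ε*x = ε*(1+x) := by ring
    rw [hεx]
    field_simp
    ring
  have hsplit : ∫ x in (0:ℝ)..(1/ε), ((-Real.log ε) * (1+x)⁻¹ + (-Real.log x)/(1+x)) =
      (-Real.log ε) * Real.log (1+1/ε) +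
      ((∫ x in (0:ℝ)..(1/ε), Real.log ((1+x)/x)/(1+x)) - (Real.log (1+1/ε))^2/2) := by
    rw [intervalIntegral.integral_add (aux_cont_int hT) (aux_neglog_int hT),
      intervalIntegral.integral_const_mul, aux_int_inv_T hT, aux_neglog_val hT]
  rw [← intervalIntegral.integral_of_le zero_le_one]
  rw [hX2] at A
  have : (∫ u in (0:ℝ)..1, (-Real.log u)/(ε+u)) =
      ∫ x in (0:ℝ)..(1/ε), ((-Real.log ε) * (1+x)⁻¹ + (-Real.log x)/(1+x)) := by
    have hne : ε⁻¹ ≠ 0 := inv_ne_zero hε.ne'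
    exact (mul_left_cancel₀ hne A).symm
  rw [this, hsplit]

lemma aux_ig {ε : ℝ} (hε : 0 < ε) : IntegrableOn
    (fun u : ℝ => Real.log ((1+Real.sqrt (1-u^2))/2)/(ε+u)) (Set.Ioc 0 1) volume := by
  apply IntegrableOn.mono_set _ Set.Ioc_subset_Icc_self
  apply ContinuousOn.integrableOn_Icc
  apply ContinuousOn.div
  · apply ContinuousOn.log (by fun_prop)
    intro u _
    have : (0:ℝ) < (1+Real.sqrt (1-u^2))/2 := by positivity
    exact this.ne'
  · fun_prop
  · intro u hu
    have : (0:ℝ) < ε + u := by linarith [hu.1]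
    exact this.ne'

lemma aux_ic {ε : ℝ} (hε : 0 < ε) : IntegrableOn
    (fun u : ℝ => Real.log 2 * (ε+u)⁻¹) (Set.Ioc 0 1) volume := by
  apply IntegrableOn.mono_set _ Set.Ioc_subset_Icc_self
  apply ContinuousOn.integrableOn_Icc
  apply ContinuousOn.mul continuousOn_const
  apply ContinuousOn.inv₀ (by fun_prop)
  intro u hu
  have : (0:ℝ) < ε + u := by linarith [hu.1]
  exact this.ne'

lemma aux_il {ε : ℝ} (hε : 0 < ε) : IntegrableOn
    (fun u : ℝ => (-Real.log u)/(ε+u)) (Set.Ioc 0 1) volume := by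
  have hfe : (fun u : ℝ => (-Real.log u)/(ε+u)) = (fun u : ℝ => Real.log u * (-(ε+u)⁻¹)) := by
    funext u; ring
  rw [hfe, ← intervalIntegrable_iff_integrableOn_Ioc_of_le zero_le_one]
  apply aux_log_int01.mul_continuousOn
  apply ContinuousOn.neg
  apply ContinuousOn.inv₀ (by fun_prop)
  intro u hu
  rw [Set.uIcc_of_le zero_le_one] at hu
  have : (0:ℝ) < ε + u := by linarith [hu.1]
  exact this.ne'

/-- As ε → 0⁺,
∫₀¹ log((1+√(1−u²))/u)/(ε+u) du = ½ log²(1/ε) + log 2 · log(1/ε) + C + o(1),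
with C = π²/6 + ∫₀¹ log((1+√(1−u²))/2)/u du. -/
theorem stmt_5 :
    Filter.Tendsto
      (fun ε : ℝ =>
        (∫ u in (0:ℝ)..1, Real.log ((1 + Real.sqrt (1 - u^2)) / u) / (ε + u)) -
          ((1/2) * (Real.log (1/ε))^2 + Real.log 2 * Real.log (1/ε)))
      (nhdsWithin 0 (Set.Ioi 0))
      (nhds (Real.pi^2 / 6 +
        ∫ u in (0:ℝ)..1, Real.log ((1 + Real.sqrt (1 - u^2)) / 2) / u)) := by
  have hlog1 : Tendsto (fun ε : ℝ => Real.log (1+ε)) (nhdsWithin 0 (Set.Ioi 0))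
      (nhds 0) := by
    have hc : ContinuousAt (fun ε : ℝ => Real.log (1+ε)) 0 :=
      (Real.continuousAt_log (by norm_num : (1:ℝ)+0 ≠ 0)).comp (by fun_prop)
    have := hc.tendsto.mono_left (nhdsWithin_le_nhds (s := Set.Ioi 0))
    simpa using this
  have hmid : Tendsto (fun ε : ℝ => Real.log 2 * Real.log (1+ε) - (Real.log (1+ε))^2/2)
      (nhdsWithin 0 (Set.Ioi 0)) (nhds 0) := by
    have := (hlog1.const_mul (Real.log 2)).sub ((hlog1.pow 2).div_const 2)
    simpa using this
  have hinv : Tendsto (fun ε : ℝ => 1/ε) (nhdsWithin 0 (Set.Ioi 0)) atTop := by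
    simpa [one_div] using tendsto_inv_nhdsGT_zero (𝕜 := ℝ)
  have htail : Tendsto (fun ε : ℝ => ∫ x in (0:ℝ)..(1/ε), Real.log ((1+x)/x)/(1+x))
      (nhdsWithin 0 (Set.Ioi 0)) (nhds (π^2/6)) := aux_tendsto_I.comp hinv
  have htot := aux_dct.add (hmid.add htail)
  rw [show (∫ u in Set.Ioc (0:ℝ) 1, Real.log ((1+Real.sqrt (1-u^2))/2)/u) + (0 + π^2/6)
      = Real.pi^2/6 + ∫ u in (0:ℝ)..1, Real.log ((1+Real.sqrt (1-u^2))/2)/u by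
    rw [intervalIntegral.integral_of_le zero_le_one]; ring] at htot
  apply Tendsto.congr' _ htot
  filter_upwards [self_mem_nhdsWithin] with ε hε
  have hε' : (0:ℝ) < ε := hε
  -- compute the main integral
  have hsplit : ∫ u in (0:ℝ)..1, Real.log ((1+Real.sqrt (1-u^2))/u)/(ε+u) =
      (∫ u in Set.Ioc (0:ℝ) 1, Real.log ((1+Real.sqrt (1-u^2))/2)/(ε+u)) +
      ((∫ u in Set.Ioc (0:ℝ) 1, Real.log 2 * (ε+u)⁻¹) +
       (∫ u in Set.Ioc (0:ℝ) 1, (-Real.log u)/(ε+u))) := by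
    rw [intervalIntegral.integral_of_le zero_le_one]
    rw [setIntegral_congr_fun measurableSet_Ioc (g := fun u : ℝ =>
      Real.log ((1+Real.sqrt (1-u^2))/2)/(ε+u) +
      (Real.log 2 * (ε+u)⁻¹ + (-Real.log u)/(ε+u)))]
    · have hadd : IntegrableOn (fun u : ℝ => Real.log 2 * (ε+u)⁻¹ + (-Real.log u)/(ε+u))
          (Set.Ioc 0 1) volume := (aux_ic hε').add (aux_il hε')
      rw [MeasureTheory.integral_add (aux_ig hε') hadd,
        MeasureTheory.integral_add (aux_ic hε') (aux_il hε')]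
    · intro u hu
      have hu0 : (0:ℝ) < u := hu.1
      have hs : (0:ℝ) < 1 + Real.sqrt (1-u^2) := by positivity
      show Real.log ((1+Real.sqrt (1-u^2))/u)/(ε+u) = _
      have e1 : Real.log ((1+Real.sqrt (1-u^2))/u) =
          Real.log ((1+Real.sqrt (1-u^2))/2) + Real.log 2 - Real.log u := by
        rw [Real.log_div hs.ne' hu0.ne', Real.log_div hs.ne' two_ne_zero]
        ring
      rw [e1]
      ring
  have hconst : ∫ u in Set.Ioc (0:ℝ) 1, Real.log 2 * (ε+u)⁻¹ =
      Real.log 2 * (Real.log (1+ε) - Real.log ε) := by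
    rw [MeasureTheory.integral_const_mul, ← intervalIntegral.integral_of_le zero_le_one,
      aux_int_inv_eps hε']
  have hlogT : Real.log (1+1/ε) = Real.log (1+ε) - Real.log ε := by
    rw [show (1:ℝ)+1/ε = (1+ε)/ε by field_simp; ring]
    rw [Real.log_div (by positivity : (0:ℝ) < 1+ε).ne' hε'.ne']
  have hlinv : Real.log (1/ε) = -Real.log ε := by rw [one_div, Real.log_inv]
  rw [hsplit, hconst, aux_J hε', hlogT, hlinv]
  ring
end

section
/- As ℓ → ∞, ∫₀¹ u·(1 − (π/2)·u)^ℓ · log((1+√(1−u²))/u) du ~ (4/π²)·(log ℓ)/ℓ². Consequently, the quantity F_ℓ := 2·(2√2)^ℓ·∫₀¹ u·(1 − (π/2)u)^ℓ·log((1+√(1−u²))/u) du satisfies F_ℓ ~ (8/π²)·(2√2)^ℓ·(log ℓ)/ℓ². -/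
open Real MeasureTheory Filter Set
open Topology intervalIntegral

namespace Stmt6

noncomputable def G (c : ℝ) (k : ℕ) (u : ℝ) : ℝ := -((1 - c*u)^(k+1) / (c*((k:ℝ)+1)))

lemma hasDerivAt_base (c u : ℝ) : HasDerivAt (fun u : ℝ => 1 - c * u) (-c) u := by
  simpa using ((hasDerivAt_id u).const_mul c).const_sub 1

lemma hasDerivAt_G (c : ℝ) (hc : 0 < c) (k : ℕ) (u : ℝ) :
    HasDerivAt (G c k) ((1 - c*u)^k) u := by
  have h : HasDerivAt (G c k)
      (-(((k+1:ℕ):ℝ) * (1 - c*u)^(k+1-1) * -c / (c*((k:ℝ)+1)))) u :=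
    (((hasDerivAt_base c u).pow (k+1)).div_const (c*((k:ℝ)+1))).neg
  have hk : ((k:ℝ)+1) ≠ 0 := by positivity
  convert h using 1
  simp only [Nat.add_sub_cancel]
  push_cast
  field_simp

lemma G_inv (c : ℝ) (hc : 0 < c) (k : ℕ) : G c k c⁻¹ = 0 := by
  have h0 : 1 - c * c⁻¹ = 0 := by field_simp; norm_num
  simp [G, h0]

lemma G_one_div (c : ℝ) (hc : 0 < c) (k : ℕ) : G c k (1/c) = 0 := by
  rw [one_div]; exact G_inv c hc k

lemma G_zero (c : ℝ) (k : ℕ) : G c k 0 = -(1/(c*((k:ℝ)+1))) := by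
  simp [G]

lemma cont_pow (c : ℝ) (n : ℕ) : Continuous fun u : ℝ => (1 - c*u)^n := by fun_prop

lemma integral_pow0 (c : ℝ) (hc : 0 < c) (n : ℕ) :
    ∫ u in (0:ℝ)..(1/c), (1 - c*u)^n = 1/(c*((n:ℝ)+1)) := by
  rw [integral_eq_sub_of_hasDerivAt (fun u _ => hasDerivAt_G c hc n u)
    ((cont_pow c n).intervalIntegrable _ _)]
  simp [G_inv c hc, G_one_div c hc, G_zero]

lemma integral_pow1 (c : ℝ) (hc : 0 < c) (n : ℕ) :
    ∫ u in (0:ℝ)..(1/c), u * (1 - c*u)^n = 1/(c^2*((n:ℝ)+1)*((n:ℝ)+2)) := by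
  have key : ∀ u : ℝ, HasDerivAt (fun u => 1/c * (G c n u - G c (n+1) u))
      (u * (1 - c*u)^n) u := by
    intro u
    have h := ((hasDerivAt_G c hc n u).sub (hasDerivAt_G c hc (n+1) u)).const_mul (1/c)
    have he : u * (1-c*u)^n = 1/c * ((1-c*u)^n - (1-c*u)^(n+1)) := by
      rw [pow_succ]; field_simp; ring
    rwa [← he] at h
  rw [integral_eq_sub_of_hasDerivAt (fun u _ => key u)
    ((by fun_prop : Continuous fun u : ℝ => u * (1-c*u)^n).intervalIntegrable _ _)]
  simp only [G_inv c hc, G_one_div c hc, G_zero]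
  have h1 : ((n:ℝ)+1) ≠ 0 := by positivity
  have h2 : ((n:ℝ)+2) ≠ 0 := by positivity
  push_cast
  field_simp
  ring

lemma integral_pow2 (c : ℝ) (hc : 0 < c) (n : ℕ) :
    ∫ u in (0:ℝ)..(1/c), u^2 * (1 - c*u)^n = 2/(c^3*((n:ℝ)+1)*((n:ℝ)+2)*((n:ℝ)+3)) := by
  have key : ∀ u : ℝ, HasDerivAt (fun u => 1/c^2 * (G c n u - 2 * G c (n+1) u + G c (n+2) u))
      (u^2 * (1 - c*u)^n) u := by
    intro u
    have h := (((hasDerivAt_G c hc n u).sub ((hasDerivAt_G c hc (n+1) u).const_mul 2)).add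
      (hasDerivAt_G c hc (n+2) u)).const_mul (1/c^2)
    have he : u^2 * (1-c*u)^n
        = 1/c^2 * ((1-c*u)^n - 2*(1-c*u)^(n+1) + (1-c*u)^(n+2)) := by
      rw [pow_succ, pow_succ, pow_succ]; field_simp; ring
    rwa [← he] at h
  rw [integral_eq_sub_of_hasDerivAt (fun u _ => key u)
    ((by fun_prop : Continuous fun u : ℝ => u^2 * (1-c*u)^n).intervalIntegrable _ _)]
  simp only [G_inv c hc, G_one_div c hc, G_zero]
  have h1 : ((n:ℝ)+1) ≠ 0 := by positivity
  have h2 : ((n:ℝ)+2) ≠ 0 := by positivity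
  have h3 : ((n:ℝ)+3) ≠ 0 := by positivity
  push_cast
  field_simp
  ring


lemma abs_log_le {x : ℝ} (hx : 0 < x) : |Real.log x| ≤ x + 1/x := by
  have hix : 0 < 1/x := by positivity
  rcases le_or_gt 1 x with h|h
  · rw [abs_of_nonneg (Real.log_nonneg h)]
    have := Real.log_le_sub_one_of_pos hx
    linarith
  · rw [abs_of_neg (Real.log_neg hx h)]
    have h2 := Real.log_le_sub_one_of_pos (show 0 < x⁻¹ by positivity)
    rw [Real.log_inv] at h2
    rw [one_div] at *
    linarith

lemma abs_int_le {f g : ℝ → ℝ} {a b : ℝ} (hab : a ≤ b)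
    (hf : IntervalIntegrable f volume a b) (hg : IntervalIntegrable g volume a b)
    (h : ∀ x ∈ Icc a b, |f x| ≤ g x) :
    |∫ x in a..b, f x| ≤ ∫ x in a..b, g x :=
  (intervalIntegral.abs_integral_le_integral_abs hab).trans
    (intervalIntegral.integral_mono_on hab hf.abs hg h)

section Bounds

variable {c : ℝ} (h1 : 1 < c) (h2 : c < 2)

lemma hc0 (h1 : 1 < c) : 0 < c := lt_trans one_pos h1

lemma hb01 (h1 : 1 < c) : (0:ℝ) ≤ 1/c := by positivity
lemma hb11 (h1 : 1 < c) : 1/c ≤ 1 := by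
  rw [div_le_one (hc0 h1)]; linarith

lemma log_one_add_sqrt_bounds {u : ℝ} (h0 : 0 ≤ u) (h1 : u ≤ 1) :
    0 ≤ Real.log (1 + Real.sqrt (1 - u^2)) ∧ Real.log (1 + Real.sqrt (1 - u^2)) ≤ 1 := by
  have hs0 : 0 ≤ Real.sqrt (1-u^2) := Real.sqrt_nonneg _
  have hs1 : Real.sqrt (1-u^2) ≤ 1 := Real.sqrt_le_one.mpr (by nlinarith)
  constructor
  · exact Real.log_nonneg (by linarith)
  · have := Real.log_le_sub_one_of_pos (show (0:ℝ) < 1 + Real.sqrt (1-u^2) by linarith)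
    linarith

lemma one_sub_cu_nonneg {u : ℝ} (h1 : 1 < c) (hub : u ≤ 1/c) : 0 ≤ 1 - c*u := by
  have := mul_le_mul_of_nonneg_left hub (le_of_lt (hc0 h1))
  rw [mul_one_div, div_self (ne_of_gt (hc0 h1))] at this
  linarith

lemma abs_one_sub_cu_le {u : ℝ} (h1 : 1 < c) (hlb : 1/c ≤ u) (hub : u ≤ 1) :
    |1 - c*u| ≤ c - 1 := by
  have hcpos := hc0 h1
  have hcu1 : 1 ≤ c*u := by
    have := mul_le_mul_of_nonneg_left hlb (le_of_lt hcpos)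
    rw [mul_one_div, div_self (ne_of_gt hcpos)] at this
    linarith
  have hcuc : c*u ≤ c := by nlinarith
  rw [abs_le]; constructor <;> linarith

lemma contA (c : ℝ) (n : ℕ) :
    Continuous fun u:ℝ => u*(1-c*u)^n*Real.log (1+Real.sqrt (1-u^2)) := by
  have hs : Continuous fun u:ℝ => 1+Real.sqrt (1-u^2) :=
    continuous_const.add (Real.continuous_sqrt.comp (by fun_prop))
  exact (by fun_prop : Continuous fun u:ℝ => u*(1-c*u)^n).mul
    (hs.log (fun u => by positivity))

lemma boundA0 (h1 : 1 < c) (n : ℕ) (hn : 1 ≤ n) :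
    |∫ u in (0:ℝ)..(1/c), u*(1-c*u)^n*Real.log (1+Real.sqrt (1-u^2))| ≤ 1/(n:ℝ)^2 := by
  have hcpos := hc0 h1
  have hn0 : (0:ℝ) < (n:ℝ) := by exact_mod_cast Nat.pos_of_ne_zero (by omega)
  have key : |∫ u in (0:ℝ)..(1/c), u*(1-c*u)^n*Real.log (1+Real.sqrt (1-u^2))|
      ≤ ∫ u in (0:ℝ)..(1/c), u*(1-c*u)^n := by
    apply abs_int_le (hb01 h1) ((contA c n).intervalIntegrable _ _)
      ((by fun_prop : Continuous fun u:ℝ => u*(1-c*u)^n).intervalIntegrable _ _)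
    intro u hu
    have h0u := hu.1
    have hcu := one_sub_cu_nonneg h1 hu.2
    have hu1 : u ≤ 1 := hu.2.trans (hb11 h1)
    obtain ⟨hl0, hl1⟩ := log_one_add_sqrt_bounds h0u hu1
    rw [abs_of_nonneg (by positivity)]
    calc u*(1-c*u)^n*Real.log (1+Real.sqrt (1-u^2)) ≤ u*(1-c*u)^n*1 := by
          apply mul_le_mul_of_nonneg_left hl1 (by positivity)
      _ = u*(1-c*u)^n := by ring
  rw [integral_pow1 c hcpos n] at key
  refine key.trans ?_
  rw [div_le_div_iff₀ (by positivity) (by positivity)]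
  have hc2 : (1:ℝ) ≤ c^2 := by nlinarith
  nlinarith [sq_nonneg ((n:ℝ)), hn0, hc2]

lemma boundA1 (h1 : 1 < c) (n : ℕ) :
    |∫ u in (1/c)..1, u*(1-c*u)^n*Real.log (1+Real.sqrt (1-u^2))| ≤ (c-1)^n := by
  have hcpos := hc0 h1
  have key : |∫ u in (1/c)..1, u*(1-c*u)^n*Real.log (1+Real.sqrt (1-u^2))|
      ≤ ∫ _u in (1/c)..1, (c-1)^n := by
    apply abs_int_le (hb11 h1) ((contA c n).intervalIntegrable _ _)
      (intervalIntegrable_const)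
    intro u hu
    have h0u : 0 ≤ u := le_trans (hb01 h1) hu.1
    obtain ⟨hl0, hl1⟩ := log_one_add_sqrt_bounds h0u hu.2
    have habs := abs_one_sub_cu_le h1 hu.1 hu.2
    have hpow : |1-c*u|^n ≤ (c-1)^n := pow_le_pow_left₀ (abs_nonneg _) habs n
    calc |u*(1-c*u)^n*Real.log (1+Real.sqrt (1-u^2))|
        = |u| * |1-c*u|^n * |Real.log (1+Real.sqrt (1-u^2))| := by
          rw [abs_mul, abs_mul, abs_pow]
      _ ≤ 1 * (c-1)^n * 1 := by
          have hc1 : (0:ℝ) ≤ c - 1 := by linarith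
          apply mul_le_mul (mul_le_mul (by rw [abs_of_nonneg h0u]; exact hu.2) hpow
            (by positivity) (by norm_num)) (by rw [abs_of_nonneg hl0]; exact hl1)
            (abs_nonneg _) (by nlinarith [pow_nonneg hc1 n])
      _ = (c-1)^n := by ring
  refine key.trans ?_
  rw [intervalIntegral.integral_const, smul_eq_mul]
  have hcn : (0:ℝ) ≤ (c-1)^n := pow_nonneg (by linarith) n
  have hfrac : 1 - 1/c ≤ 1 := by linarith [hb01 h1]
  nlinarith

lemma boundT (h1 : 1 < c) (h2 : c < 2) (n : ℕ) :
    |∫ u in (1/c)..1, (1-c*u)^n*(u*Real.log u)| ≤ (c-1)^n := by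
  have hcpos := hc0 h1
  have key : |∫ u in (1/c)..1, (1-c*u)^n*(u*Real.log u)|
      ≤ ∫ _u in (1/c)..1, (c-1)^n := by
    apply abs_int_le (hb11 h1) (((cont_pow c n).mul Real.continuous_mul_log).intervalIntegrable _ _)
      (intervalIntegrable_const)
    intro u hu
    have hbpos : 0 < 1/c := by positivity
    have h0u : 0 < u := lt_of_lt_of_le hbpos hu.1
    have habs := abs_one_sub_cu_le h1 hu.1 hu.2
    have hpow : |1-c*u|^n ≤ (c-1)^n := pow_le_pow_left₀ (abs_nonneg _) habs n
    have hlogu : |u * Real.log u| ≤ 1 := by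
      have hlb : Real.log (1/c) ≤ Real.log u := Real.log_le_log hbpos hu.1
      rw [one_div, Real.log_inv] at hlb
      have hup : Real.log u ≤ 0 := Real.log_nonpos (le_of_lt h0u) hu.2
      have hlc : Real.log c ≤ c - 1 := by
        have := Real.log_le_sub_one_of_pos hcpos; linarith
      rw [abs_mul, abs_of_nonneg (le_of_lt h0u), abs_of_nonpos hup]
      have hml : -Real.log u ≤ 1 := by linarith
      have hml0 : 0 ≤ -Real.log u := by linarith
      calc u * -Real.log u ≤ 1 * 1 :=
            mul_le_mul hu.2 hml hml0 (by norm_num)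
        _ = 1 := by ring
    calc |(1-c*u)^n*(u*Real.log u)| = |1-c*u|^n * |u*Real.log u| := by
          rw [abs_mul, abs_pow]
      _ ≤ (c-1)^n * 1 := mul_le_mul hpow hlogu (abs_nonneg _) (pow_nonneg (by linarith) n)
      _ = (c-1)^n := by ring
  refine key.trans ?_
  rw [intervalIntegral.integral_const, smul_eq_mul]
  have hcn : (0:ℝ) ≤ (c-1)^n := pow_nonneg (by linarith) n
  have hfrac : 1 - 1/c ≤ 1 := by linarith [hb01 h1]
  nlinarith

lemma contQ (c : ℝ) (n : ℕ) (hn : 1 ≤ n) :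
    Continuous fun u:ℝ => u*(1-c*u)^n*Real.log ((n:ℝ)*u) := by
  have hn0 : (n:ℝ) ≠ 0 := by
    exact_mod_cast Nat.pos_of_ne_zero (by omega) |>.ne'
  have he : (fun u:ℝ => u*(1-c*u)^n*Real.log ((n:ℝ)*u))
      = fun u => ((1-c*u)^n * ((n:ℝ))⁻¹) * (((n:ℝ)*u) * Real.log ((n:ℝ)*u)) := by
    funext u; field_simp
  rw [he]
  exact ((cont_pow c n).mul continuous_const).mul
    (Real.continuous_mul_log.comp (continuous_const.mul continuous_id))

lemma boundQ (h1 : 1 < c) (n : ℕ) (hn : 1 ≤ n) :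
    |∫ u in (0:ℝ)..(1/c), u*(1-c*u)^n*Real.log ((n:ℝ)*u)| ≤ 3/(n:ℝ)^2 := by
  have hcpos := hc0 h1
  have hn0 : (0:ℝ) < (n:ℝ) := by exact_mod_cast Nat.pos_of_ne_zero (by omega)
  have hintg : IntervalIntegrable
      (fun u:ℝ => (n:ℝ)*(u^2*(1-c*u)^n) + ((n:ℝ))⁻¹*(1-c*u)^n) volume 0 (1/c) :=
    (by fun_prop : Continuous fun u:ℝ => (n:ℝ)*(u^2*(1-c*u)^n) + ((n:ℝ))⁻¹*(1-c*u)^n).intervalIntegrable _ _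
  have key : |∫ u in (0:ℝ)..(1/c), u*(1-c*u)^n*Real.log ((n:ℝ)*u)|
      ≤ ∫ u in (0:ℝ)..(1/c), ((n:ℝ)*(u^2*(1-c*u)^n) + ((n:ℝ))⁻¹*(1-c*u)^n) := by
    apply abs_int_le (hb01 h1) ((contQ c n hn).intervalIntegrable _ _) hintg
    intro u hu
    have hcu := one_sub_cu_nonneg h1 hu.2
    rcases eq_or_lt_of_le hu.1 with h|h
    · rw [← h]; simp
    · have hnu : 0 < (n:ℝ)*u := by positivity
      have hlg := abs_log_le hnu
      calc |u*(1-c*u)^n*Real.log ((n:ℝ)*u)|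
          = u*(1-c*u)^n * |Real.log ((n:ℝ)*u)| := by
            rw [abs_mul, abs_of_nonneg (by positivity)]
        _ ≤ u*(1-c*u)^n * ((n:ℝ)*u + 1/((n:ℝ)*u)) :=
            mul_le_mul_of_nonneg_left hlg (by positivity)
        _ = (n:ℝ)*(u^2*(1-c*u)^n) + ((n:ℝ))⁻¹*(1-c*u)^n := by
            field_simp
  rw [intervalIntegral.integral_add
      (((by fun_prop : Continuous fun u:ℝ => (n:ℝ)*(u^2*(1-c*u)^n))).intervalIntegrable _ _)
      (((by fun_prop : Continuous fun u:ℝ => ((n:ℝ))⁻¹*(1-c*u)^n)).intervalIntegrable _ _),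
    intervalIntegral.integral_const_mul, intervalIntegral.integral_const_mul,
    integral_pow2 c hcpos n, integral_pow0 c hcpos n] at key
  refine key.trans ?_
  have hc2 : (1:ℝ) ≤ c^2 := by nlinarith
  have hc3 : (1:ℝ) ≤ c^3 := by nlinarith
  have hP : ((n:ℝ))^3 ≤ ((n:ℝ)+1)*((n:ℝ)+2)*((n:ℝ)+3) := by nlinarith
  have hP' : ((n:ℝ))^3 ≤ c^3*(((n:ℝ)+1)*(((n:ℝ)+2)*((n:ℝ)+3))) := by
    nlinarith [mul_le_mul_of_nonneg_right hc3
      (by positivity : (0:ℝ) ≤ ((n:ℝ)+1)*(((n:ℝ)+2)*((n:ℝ)+3)))]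
  have e1 : (n:ℝ) * (2/(c^3*((n:ℝ)+1)*((n:ℝ)+2)*((n:ℝ)+3))) ≤ 2/(n:ℝ)^2 := by
    rw [mul_div_assoc']
    rw [div_le_div_iff₀ (by positivity) (by positivity)]
    nlinarith
  have e2 : ((n:ℝ))⁻¹ * (1/(c*((n:ℝ)+1))) ≤ 1/(n:ℝ)^2 := by
    have he : ((n:ℝ))⁻¹ * (1/(c*((n:ℝ)+1))) = 1/((n:ℝ)*(c*((n:ℝ)+1))) := by
      field_simp
    rw [he, div_le_div_iff₀ (by positivity) (by positivity)]
    nlinarith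
  have hsum : (2:ℝ)/(n:ℝ)^2 + 1/(n:ℝ)^2 = 3/(n:ℝ)^2 := by ring
  linarith

lemma main_est (h1 : 1 < c) (h2 : c < 2) (n : ℕ) (hn : 1 ≤ n) :
    |(∫ u in (0:ℝ)..1, u*(1-c*u)^n*Real.log ((1+Real.sqrt (1-u^2))/u))
      - Real.log n / (c^2*((n:ℝ)+1)*((n:ℝ)+2))| ≤ 4/(n:ℝ)^2 + 2*(c-1)^n := by
  have hcpos := hc0 h1
  have hnR : (0:ℝ) < (n:ℝ) := by exact_mod_cast Nat.pos_of_ne_zero (by omega)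
  have hn0 : (n:ℝ) ≠ 0 := ne_of_gt hnR
  have contB : Continuous fun u:ℝ => (1-c*u)^n*(u*Real.log u) :=
    (cont_pow c n).mul Real.continuous_mul_log
  -- Step 1 : rewrite the integrand
  have step1 : (∫ u in (0:ℝ)..1, u*(1-c*u)^n*Real.log ((1+Real.sqrt (1-u^2))/u))
      = ∫ u in (0:ℝ)..1,
          (u*(1-c*u)^n*Real.log (1+Real.sqrt (1-u^2)) - (1-c*u)^n*(u*Real.log u)) := by
    apply intervalIntegral.integral_congr
    intro u hu
    rw [Set.uIcc_of_le (by norm_num : (0:ℝ) ≤ 1)] at hu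
    dsimp only
    rcases eq_or_lt_of_le hu.1 with h|h
    · rw [← h]; simp
    · rw [Real.log_div (by positivity) (ne_of_gt h)]; ring
  -- Step 2 : split at 1/c
  have step2 : (∫ u in (0:ℝ)..1,
          (u*(1-c*u)^n*Real.log (1+Real.sqrt (1-u^2)) - (1-c*u)^n*(u*Real.log u)))
      = (∫ u in (0:ℝ)..(1/c),
          (u*(1-c*u)^n*Real.log (1+Real.sqrt (1-u^2)) - (1-c*u)^n*(u*Real.log u)))
        + ∫ u in (1/c)..1,
          (u*(1-c*u)^n*Real.log (1+Real.sqrt (1-u^2)) - (1-c*u)^n*(u*Real.log u)) :=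
    (intervalIntegral.integral_add_adjacent_intervals
      (((contA c n).sub contB).intervalIntegrable _ _)
      (((contA c n).sub contB).intervalIntegrable _ _)).symm
  -- Step 3 : separate the two pieces on each subinterval
  have step3a : (∫ u in (0:ℝ)..(1/c),
          (u*(1-c*u)^n*Real.log (1+Real.sqrt (1-u^2)) - (1-c*u)^n*(u*Real.log u)))
      = (∫ u in (0:ℝ)..(1/c), u*(1-c*u)^n*Real.log (1+Real.sqrt (1-u^2)))
        - ∫ u in (0:ℝ)..(1/c), (1-c*u)^n*(u*Real.log u) :=
    intervalIntegral.integral_sub ((contA c n).intervalIntegrable _ _)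
      (contB.intervalIntegrable _ _)
  have step3b : (∫ u in (1/c)..1,
          (u*(1-c*u)^n*Real.log (1+Real.sqrt (1-u^2)) - (1-c*u)^n*(u*Real.log u)))
      = (∫ u in (1/c)..1, u*(1-c*u)^n*Real.log (1+Real.sqrt (1-u^2)))
        - ∫ u in (1/c)..1, (1-c*u)^n*(u*Real.log u) :=
    intervalIntegral.integral_sub ((contA c n).intervalIntegrable _ _)
      (contB.intervalIntegrable _ _)
  -- Step 4 : extract the log n part on [0, 1/c]
  have step4 : (∫ u in (0:ℝ)..(1/c), (1-c*u)^n*(u*Real.log u))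
      = (∫ u in (0:ℝ)..(1/c), u*(1-c*u)^n*Real.log ((n:ℝ)*u))
        - Real.log n * (1/(c^2*((n:ℝ)+1)*((n:ℝ)+2))) := by
    have e : (∫ u in (0:ℝ)..(1/c), (1-c*u)^n*(u*Real.log u))
        = ∫ u in (0:ℝ)..(1/c),
            (u*(1-c*u)^n*Real.log ((n:ℝ)*u) - Real.log n * (u*(1-c*u)^n)) := by
      apply intervalIntegral.integral_congr
      intro u hu
      rw [Set.uIcc_of_le (hb01 h1)] at hu
      dsimp only
      rcases eq_or_lt_of_le hu.1 with h|h
      · rw [← h]; simp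
      · rw [Real.log_mul hn0 (ne_of_gt h)]; ring
    rw [e, intervalIntegral.integral_sub ((contQ c n hn).intervalIntegrable _ _)
        (((by fun_prop : Continuous fun u:ℝ => Real.log n * (u*(1-c*u)^n))).intervalIntegrable _ _),
      intervalIntegral.integral_const_mul, integral_pow1 c hcpos n]
  -- decomposition
  have decomp : (∫ u in (0:ℝ)..1, u*(1-c*u)^n*Real.log ((1+Real.sqrt (1-u^2))/u))
      - Real.log n / (c^2*((n:ℝ)+1)*((n:ℝ)+2))
      = (∫ u in (0:ℝ)..(1/c), u*(1-c*u)^n*Real.log (1+Real.sqrt (1-u^2)))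
        + (∫ u in (1/c)..1, u*(1-c*u)^n*Real.log (1+Real.sqrt (1-u^2)))
        - (∫ u in (0:ℝ)..(1/c), u*(1-c*u)^n*Real.log ((n:ℝ)*u))
        - ∫ u in (1/c)..1, (1-c*u)^n*(u*Real.log u) := by
    rw [step1, step2, step3a, step3b, step4]; ring
  rw [decomp]
  have bA0 := boundA0 h1 n hn
  have bA1 := boundA1 h1 n
  have bQ := boundQ h1 n hn
  have bT := boundT h1 h2 n
  set A0 := ∫ u in (0:ℝ)..(1/c), u*(1-c*u)^n*Real.log (1+Real.sqrt (1-u^2))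
  set A1 := ∫ u in (1/c)..1, u*(1-c*u)^n*Real.log (1+Real.sqrt (1-u^2))
  set Q := ∫ u in (0:ℝ)..(1/c), u*(1-c*u)^n*Real.log ((n:ℝ)*u)
  set T := ∫ u in (1/c)..1, (1-c*u)^n*(u*Real.log u)
  have tri : |A0 + A1 - Q - T| ≤ |A0| + |A1| + |Q| + |T| := by
    have t1 := abs_add_le (A0 + A1 - Q) (-T)
    have t2 := abs_add_le (A0 + A1) (-Q)
    have t3 := abs_add_le A0 A1
    simp only [abs_neg, ← sub_eq_add_neg] at t1 t2
    linarith
  calc |A0 + A1 - Q - T| ≤ |A0| + |A1| + |Q| + |T| := tri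
    _ ≤ 1/(n:ℝ)^2 + (c-1)^n + 3/(n:ℝ)^2 + (c-1)^n := by linarith
    _ = 4/(n:ℝ)^2 + 2*(c-1)^n := by ring

end Bounds

end Stmt6

open Stmt6 in
/-- As ℓ → ∞, ∫₀¹ u(1−(π/2)u)^ℓ log((1+√(1−u²))/u) du ~ (4/π²)(log ℓ)/ℓ²,
and consequently F_ℓ := 2(2√2)^ℓ ∫₀¹ u(1−(π/2)u)^ℓ log((1+√(1−u²))/u) du
satisfies F_ℓ ~ (8/π²)(2√2)^ℓ (log ℓ)/ℓ². -/
theorem stmt_6 :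
    Filter.Tendsto
      (fun ℓ : ℕ =>
        (∫ u in (0:ℝ)..1, u * (1 - (Real.pi/2) * u)^ℓ *
            Real.log ((1 + Real.sqrt (1 - u^2)) / u)) /
          ((4 / Real.pi^2) * Real.log ℓ / (ℓ:ℝ)^2))
      Filter.atTop (nhds 1) ∧
    Filter.Tendsto
      (fun ℓ : ℕ =>
        (2 * (2 * Real.sqrt 2)^ℓ *
            ∫ u in (0:ℝ)..1, u * (1 - (Real.pi/2) * u)^ℓ *
              Real.log ((1 + Real.sqrt (1 - u^2)) / u)) /
          ((8 / Real.pi^2) * (2 * Real.sqrt 2)^ℓ * Real.log ℓ / (ℓ:ℝ)^2))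
      Filter.atTop (nhds 1) := by
  have h1 : 1 < Real.pi/2 := by nlinarith [Real.pi_gt_three]
  have h2 : Real.pi/2 < 2 := by nlinarith [Real.pi_lt_d2]
  set c : ℝ := Real.pi/2 with hcdef
  set f : ℕ → ℝ := fun ℓ =>
    ∫ u in (0:ℝ)..1, u * (1 - c * u)^ℓ * Real.log ((1 + Real.sqrt (1 - u^2)) / u) with hfdef
  set g : ℕ → ℝ := fun ℓ => (ℓ:ℝ)^2/(((ℓ:ℝ)+1)*((ℓ:ℝ)+2))
    + c^2*(ℓ:ℝ)^2/Real.log ℓ * (f ℓ - Real.log ℓ/(c^2*((ℓ:ℝ)+1)*((ℓ:ℝ)+2))) with hgdef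
  have heq : ∀ᶠ ℓ : ℕ in atTop,
      f ℓ / ((4 / Real.pi^2) * Real.log ℓ / (ℓ:ℝ)^2) = g ℓ := by
    filter_upwards [eventually_ge_atTop 2] with ℓ hℓ
    have hl2 : (2:ℝ) ≤ (ℓ:ℝ) := by exact_mod_cast hℓ
    have hlog : 0 < Real.log ℓ := Real.log_pos (by linarith)
    have hl0 : (0:ℝ) < (ℓ:ℝ) := by linarith
    have hpi : Real.pi ≠ 0 := Real.pi_ne_zero
    have e1 : ((ℓ:ℝ)+1) ≠ 0 := by positivity
    have e2 : ((ℓ:ℝ)+2) ≠ 0 := by positivity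
    rw [hgdef, hcdef]
    field_simp
    ring
  have t1 : Tendsto (fun ℓ:ℕ => (ℓ:ℝ)^2/(((ℓ:ℝ)+1)*((ℓ:ℝ)+2))) atTop (𝓝 1) := by
    have h := (tendsto_natCast_div_add_atTop (1:ℝ)).mul (tendsto_natCast_div_add_atTop (2:ℝ))
    rw [mul_one] at h
    refine h.congr fun ℓ => ?_
    rw [div_mul_div_comm, ← sq]
  have hgeom : Tendsto (fun ℓ:ℕ => (ℓ:ℝ)^2*(c-1)^ℓ) atTop (𝓝 0) :=
    tendsto_pow_const_mul_const_pow_of_lt_one 2 (by linarith) (by linarith)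
  have hden : Tendsto (fun ℓ:ℕ => Real.log ℓ) atTop atTop :=
    Real.tendsto_log_atTop.comp tendsto_natCast_atTop_atTop
  have t2 : Tendsto (fun ℓ:ℕ =>
      c^2*(ℓ:ℝ)^2/Real.log ℓ * (f ℓ - Real.log ℓ/(c^2*((ℓ:ℝ)+1)*((ℓ:ℝ)+2)))) atTop (𝓝 0) := by
    apply squeeze_zero_norm' (a := fun ℓ:ℕ => c^2*(4 + 2*((ℓ:ℝ)^2*(c-1)^ℓ))/Real.log ℓ)
    · filter_upwards [eventually_ge_atTop 2] with ℓ hℓ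
      have hl2 : (2:ℝ) ≤ (ℓ:ℝ) := by exact_mod_cast hℓ
      have hlog : 0 < Real.log ℓ := Real.log_pos (by linarith)
      have hl0 : (0:ℝ) < (ℓ:ℝ) := by linarith
      have est := main_est h1 h2 ℓ (by omega)
      have hcoef : (0:ℝ) ≤ c^2*(ℓ:ℝ)^2/Real.log ℓ := by positivity
      have e : c^2*(ℓ:ℝ)^2/Real.log ℓ * (4/(ℓ:ℝ)^2 + 2*(c-1)^ℓ)
          = c^2*(4 + 2*((ℓ:ℝ)^2*(c-1)^ℓ))/Real.log ℓ := by
        field_simp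
      calc ‖c^2*(ℓ:ℝ)^2/Real.log ℓ * (f ℓ - Real.log ℓ/(c^2*((ℓ:ℝ)+1)*((ℓ:ℝ)+2)))‖
          = c^2*(ℓ:ℝ)^2/Real.log ℓ * |f ℓ - Real.log ℓ/(c^2*((ℓ:ℝ)+1)*((ℓ:ℝ)+2))| := by
            rw [Real.norm_eq_abs, abs_mul, abs_of_nonneg hcoef]
        _ ≤ c^2*(ℓ:ℝ)^2/Real.log ℓ * (4/(ℓ:ℝ)^2 + 2*(c-1)^ℓ) :=
            mul_le_mul_of_nonneg_left est hcoef
        _ = c^2*(4 + 2*((ℓ:ℝ)^2*(c-1)^ℓ))/Real.log ℓ := e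
    · have hnum : Tendsto (fun ℓ:ℕ => c^2*(4 + 2*((ℓ:ℝ)^2*(c-1)^ℓ))) atTop
          (𝓝 (c^2*(4 + 2*0))) :=
        tendsto_const_nhds.mul (tendsto_const_nhds.add (tendsto_const_nhds.mul hgeom))
      simpa using hnum.div_atTop hden
  have tg : Tendsto g atTop (𝓝 1) := by
    rw [hgdef]
    simpa using t1.add t2
  have main : Tendsto (fun ℓ:ℕ => f ℓ / ((4 / Real.pi^2) * Real.log ℓ / (ℓ:ℝ)^2)) atTop (𝓝 1) := by
    rwa [tendsto_congr' heq]
  refine ⟨main, ?_⟩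
  have hs2 : (0:ℝ) < Real.sqrt 2 := Real.sqrt_pos.mpr (by norm_num)
  refine main.congr fun ℓ => ?_
  have ha : ((2:ℝ) * (2 * Real.sqrt 2)^ℓ) ≠ 0 := by positivity
  have key : (8/Real.pi^2)*(2*Real.sqrt 2)^ℓ*Real.log ℓ/(ℓ:ℝ)^2
      = ((2:ℝ)*(2*Real.sqrt 2)^ℓ) * ((4/Real.pi^2)*Real.log ℓ/(ℓ:ℝ)^2) := by ring
  calc f ℓ / ((4/Real.pi^2)*Real.log ℓ/(ℓ:ℝ)^2)
      = ((2:ℝ)*(2*Real.sqrt 2)^ℓ) * f ℓ / (((2:ℝ)*(2*Real.sqrt 2)^ℓ) * ((4/Real.pi^2)*Real.log ℓ/(ℓ:ℝ)^2)) := by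
        rw [mul_div_mul_left _ _ ha]
    _ = (2*(2*Real.sqrt 2)^ℓ * f ℓ) / ((8/Real.pi^2)*(2*Real.sqrt 2)^ℓ*Real.log ℓ/(ℓ:ℝ)^2) := by
        rw [key]
end

section
/- Let a > 0 and let r : (0,1) → (0,1) be a continuous strictly increasing function with lim_{s→1⁻} r(s) = 1 and satisfying 1 − r(s) ~ a·(1−s)·log²(1−s) as s → 1⁻. Let s : (r(0⁺),1) → (0,1) denote the inverse function of r. Then 1 − s(y) ~ (1−y)/(a·log²(1−y)) as y → 1⁻. -/
open Real Filter Set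

private lemma aux_div_atBot {α : Type*} {l : Filter α} {f g : α → ℝ} {c : ℝ}
    (h : Filter.Tendsto f l (nhds c)) (hg : Filter.Tendsto g l Filter.atBot) :
    Filter.Tendsto (fun x => f x / g x) l (nhds 0) := by
  have h1 := (h.div_atTop (tendsto_neg_atBot_atTop.comp hg)).neg
  rw [neg_zero] at h1
  refine h1.congr fun x => ?_
  simp [Function.comp, div_neg]

private lemma aux_log_div_atBot :
    Filter.Tendsto (fun x : ℝ => Real.log x / x) Filter.atBot (nhds 0) := by
  have h := (Real.isLittleO_log_id_atTop.tendsto_div_nhds_zero).comp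
    tendsto_neg_atBot_atTop
  have h2 := h.neg
  rw [neg_zero] at h2
  refine h2.congr fun x => ?_
  simp [Function.comp, Real.log_neg_eq_log, div_neg]

/-- Asymptotic inversion: if r : (0,1) → (0,1) is continuous, strictly
increasing, r(s) → 1 as s → 1⁻ and 1 − r(s) ~ a(1−s)log²(1−s), then its
inverse s satisfies 1 − s(y) ~ (1−y)/(a log²(1−y)) as y → 1⁻. -/
theorem stmt_13 (a : ℝ) (ha : 0 < a) (r sInv : ℝ → ℝ)
    (hmaps : ∀ x ∈ Set.Ioo (0:ℝ) 1, r x ∈ Set.Ioo (0:ℝ) 1)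
    (hmono : StrictMonoOn r (Set.Ioo (0:ℝ) 1))
    (hcont : ContinuousOn r (Set.Ioo (0:ℝ) 1))
    (hlim : Filter.Tendsto r (nhdsWithin 1 (Set.Iio 1)) (nhds 1))
    (hasym : Filter.Tendsto
      (fun s => (1 - r s) / (a * (1 - s) * (Real.log (1 - s))^2))
      (nhdsWithin 1 (Set.Iio 1)) (nhds 1))
    (hinv : ∀ᶠ y in nhdsWithin 1 (Set.Iio 1),
      sInv y ∈ Set.Ioo (0:ℝ) 1 ∧ r (sInv y) = y) :
    Filter.Tendsto
      (fun y => (1 - sInv y) / ((1 - y) / (a * (Real.log (1 - y))^2)))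
      (nhdsWithin 1 (Set.Iio 1)) (nhds 1) := by
  set F := nhdsWithin (1:ℝ) (Set.Iio 1) with hF
  -- Step A : sInv tends to 1 from the left
  have hs1 : Filter.Tendsto sInv F (nhdsWithin 1 (Set.Iio 1)) := by
    rw [tendsto_nhdsWithin_iff]
    constructor
    · rw [tendsto_order]
      constructor
      · intro b hb
        rcases le_or_gt b 0 with hb0 | hb0
        · filter_upwards [hinv] with y hy
          exact lt_of_le_of_lt hb0 hy.1.1
        · have hbI : b ∈ Set.Ioo (0:ℝ) 1 := ⟨hb0, hb⟩
          have hrb : r b ∈ Set.Ioo (0:ℝ) 1 := hmaps b hbI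
          have hev : ∀ᶠ y in F, r b < y := by
            apply eventually_nhdsWithin_of_eventually_nhds
            exact eventually_gt_nhds hrb.2
          filter_upwards [hinv, hev] with y hy hry
          by_contra hle
          push_neg at hle
          have := hmono.le_iff_le hy.1 hbI |>.mpr hle
          rw [hy.2] at this
          exact absurd hry (not_lt.mpr this)
      · intro b hb
        filter_upwards [hinv] with y hy
        exact lt_trans hy.1.2 hb
    · filter_upwards [hinv] with y hy
      exact hy.1.2
  -- Step B : the asymptotic ratio composed with sInv
  have tC : Filter.Tendsto
      (fun y => (1 - y) / (a * (1 - sInv y) * (Real.log (1 - sInv y))^2)) F (nhds 1) := by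
    have := hasym.comp hs1
    refine this.congr' ?_
    filter_upwards [hinv] with y hy
    simp [Function.comp, hy.2]
  -- Step C : 1 - sInv y → 0⁺
  have t_t : Filter.Tendsto (fun y => 1 - sInv y) F (nhdsWithin 0 (Set.Ioi 0)) := by
    rw [tendsto_nhdsWithin_iff]
    constructor
    · have : Filter.Tendsto sInv F (nhds 1) := hs1.mono_right nhdsWithin_le_nhds
      have h := (tendsto_const_nhds (x := (1:ℝ)) (f := F)).sub this
      simpa using h
    · filter_upwards [hinv] with y hy
      simp [Set.mem_Ioi, sub_pos, hy.1.2]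
  -- Step D : log (1 - sInv y) → -∞
  have tlog : Filter.Tendsto (fun y => Real.log (1 - sInv y)) F Filter.atBot :=
    Real.tendsto_log_nhdsGT_zero.comp t_t
  -- eventually facts
  have hC_pos : ∀ᶠ y in F,
      0 < (1 - y) / (a * (1 - sInv y) * (Real.log (1 - sInv y))^2) := by
    filter_upwards [tC.eventually (eventually_gt_nhds (show (0:ℝ) < 1 by norm_num))] with y hy
    exact hy
  have hlogne : ∀ᶠ y in F, Real.log (1 - sInv y) < -1 := by
    filter_upwards [tlog.eventually (eventually_le_atBot (-2 : ℝ))] with y hy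
    linarith
  have hypos : ∀ᶠ y in F, 0 < 1 - sInv y := by
    filter_upwards [hinv] with y hy
    simpa using hy.1.2
  have hy1 : ∀ᶠ y in F, y < 1 := by
    rw [hF]
    exact eventually_mem_nhdsWithin.mono fun y hy => hy
  -- Step E : ratio of logs tends to 1
  have tR : Filter.Tendsto
      (fun y => Real.log (1 - y) / Real.log (1 - sInv y)) F (nhds 1) := by
    have hlogC : Filter.Tendsto
        (fun y => Real.log ((1 - y) / (a * (1 - sInv y) * (Real.log (1 - sInv y))^2)))
        F (nhds 0) := by
      have hc : ContinuousAt Real.log 1 := Real.continuousAt_log one_ne_zero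
      have := hc.tendsto.comp tC
      simpa [Function.comp_def] using this
    have h1 : Filter.Tendsto
        (fun y => Real.log ((1 - y) / (a * (1 - sInv y) * (Real.log (1 - sInv y))^2))
          / Real.log (1 - sInv y)) F (nhds 0) := aux_div_atBot hlogC tlog
    have h2 : Filter.Tendsto
        (fun y => Real.log a / Real.log (1 - sInv y)) F (nhds 0) :=
      aux_div_atBot tendsto_const_nhds tlog
    have h3 : Filter.Tendsto
        (fun y => Real.log (Real.log (1 - sInv y)) / Real.log (1 - sInv y)) F (nhds 0) :=
      aux_log_div_atBot.comp tlog
    have hsum := ((h1.add h2).add (h3.const_mul 2)).add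
      (tendsto_const_nhds (x := (1:ℝ)) (f := F))
    rw [show ((0:ℝ) + 0 + 2 * 0) + 1 = 1 by ring] at hsum
    refine hsum.congr' ?_
    filter_upwards [hC_pos, hlogne, hypos, hy1] with y hC hln ht hy1'
    have ht1 : (1 - sInv y) ≠ 0 := ne_of_gt ht
    have hln0 : Real.log (1 - sInv y) ≠ 0 := by linarith
    have hden : a * (1 - sInv y) * (Real.log (1 - sInv y))^2 ≠ 0 := by
      positivity
    have hCne : (1 - y) / (a * (1 - sInv y) * (Real.log (1 - sInv y))^2) ≠ 0 :=
      ne_of_gt hC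
    have key : Real.log (1 - y) =
        Real.log ((1 - y) / (a * (1 - sInv y) * (Real.log (1 - sInv y))^2))
        + Real.log a + Real.log (1 - sInv y)
        + 2 * Real.log (Real.log (1 - sInv y)) := by
      have hy0' : (1 - y) ≠ 0 := by
        have : (0:ℝ) < 1 - y := by linarith
        exact ne_of_gt this
      have hld : Real.log (a * (1 - sInv y) * (Real.log (1 - sInv y))^2) =
          Real.log a + Real.log (1 - sInv y)
          + 2 * Real.log (Real.log (1 - sInv y)) := by
        rw [Real.log_mul (by positivity) (pow_ne_zero 2 hln0),
          Real.log_mul (ne_of_gt ha) ht1, Real.log_pow]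
        push_cast
        ring
      have k1 := Real.log_div hy0' hden
      linarith [k1, hld]
    have gen : ∀ (A B D L : ℝ), L ≠ 0 →
        A / L + B / L + 2 * (D / L) + 1 = (A + B + L + 2 * D) / L := by
      intro A B D L hL
      field_simp
      ring
    rw [gen _ _ _ _ hln0, ← key]
  -- Step F : assemble
  have tCinv : Filter.Tendsto
      (fun y => (a * (1 - sInv y) * (Real.log (1 - sInv y))^2) / (1 - y)) F (nhds 1) := by
    have := tC.inv₀ one_ne_zero
    rw [inv_one] at this
    refine this.congr' ?_
    filter_upwards [hC_pos] with y hy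
    rw [inv_div]
  have hfinal := tCinv.mul (tR.mul tR)
  rw [show (1:ℝ) * (1 * 1) = 1 by ring] at hfinal
  refine hfinal.congr' ?_
  filter_upwards [hC_pos, hlogne, hypos, hy1] with y hC hln ht hy1'
  have ht1 : (1 - sInv y) ≠ 0 := ne_of_gt ht
  have hln0 : Real.log (1 - sInv y) ≠ 0 := by linarith
  have hy0 : (1 - y) ≠ 0 := by
    have : 0 < 1 - y := by linarith
    exact ne_of_gt this
  field_simp
end

section
/- Let ξ be a real random variable with ξ ≥ −1 almost surely, and suppose the Laplace transform F(λ) = E[e^{−λξ}] (finite for all λ ≥ 0) satisfies F(λ) = 1 + o(λ) as λ → 0⁺. Then ξ is integrable and E[ξ] = 0. -/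
open Real MeasureTheory Filter Asymptotics

theorem aux_mono (x a b : ℝ) (ha : 0 < a) (hab : a ≤ b) :
    (1 - exp (-b * x)) / b ≤ (1 - exp (-a * x)) / a := by
  have hb : 0 < b := ha.trans_le hab
  have hconv := convexOn_exp.2 (Set.mem_univ (-b * x)) (Set.mem_univ (0:ℝ))
    (show (0:ℝ) ≤ a / b by positivity)
    (show (0:ℝ) ≤ 1 - a / b by
      have : a / b ≤ 1 := (div_le_one hb).2 hab
      linarith)
    (show a / b + (1 - a / b) = 1 by ring)
  have h1 : (a / b) • (-b * x) + (1 - a / b) • (0:ℝ) = -a * x := by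
    simp only [smul_eq_mul, mul_zero, add_zero]; rw [div_mul_eq_mul_div, div_eq_iff hb.ne']; ring
  rw [h1] at hconv
  simp only [smul_eq_mul, Real.exp_zero, mul_one] at hconv
  rw [div_le_div_iff₀ hb ha]
  have hab2 : a / b * b = a := by field_simp
  nlinarith [mul_le_mul_of_nonneg_right hconv hb.le, hab2, Real.exp_pos (-b*x)]

theorem aux_tendsto (x : ℝ) :
    Tendsto (fun n : ℕ => (1 - exp (-(((n:ℝ)+1)⁻¹) * x)) / ((n:ℝ)+1)⁻¹) atTop (nhds x) := by
  have hd : HasDerivAt (fun l : ℝ => 1 - exp (-l * x)) x 0 := by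
    have h1 : HasDerivAt (fun l : ℝ => -l * x) (-1 * x) 0 :=
      ((hasDerivAt_id (0:ℝ)).neg).mul_const x
    have h3 := h1.exp.const_sub 1
    exact h3.congr_deriv (by simp)
  have hslope := hasDerivAt_iff_tendsto_slope.mp hd
  have hseq : Tendsto (fun n : ℕ => ((n:ℝ)+1)⁻¹) atTop (nhdsWithin 0 {(0:ℝ)}ᶜ) := by
    refine tendsto_nhdsWithin_of_tendsto_nhds_of_eventually_within _ ?_ ?_
    · exact tendsto_one_div_add_atTop_nhds_zero_nat.congr (by intro n; rw [one_div])
    · exact Eventually.of_forall fun n =>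
        Set.mem_compl_singleton_iff.mpr (by positivity)
  have h := hslope.comp hseq
  refine h.congr fun n => ?_
  simp [Function.comp_apply, slope_def_field]

/-- If ξ ≥ −1 a.s. and its Laplace transform F(λ) = E[e^{−λξ}] (finite for all
λ ≥ 0) satisfies F(λ) = 1 + o(λ) as λ → 0⁺, then ξ is integrable with
E[ξ] = 0. -/
theorem stmt_17 {Ω : Type*} [MeasurableSpace Ω] (P : Measure Ω) [IsProbabilityMeasure P]
    (ξ : Ω → ℝ) (hmeas : Measurable ξ) (hbound : ∀ᵐ ω ∂P, -1 ≤ ξ ω)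
    (hF : ∀ lam : ℝ, 0 ≤ lam → Integrable (fun ω => Real.exp (-lam * ξ ω)) P)
    (hlittle : (fun lam : ℝ => (∫ ω, Real.exp (-lam * ξ ω) ∂P) - 1)
      =o[nhdsWithin 0 (Set.Ioi 0)] (fun lam => lam)) :
    Integrable ξ P ∧ ∫ ω, ξ ω ∂P = 0 := by
  set lam : ℕ → ℝ := fun n => ((n:ℝ)+1)⁻¹ with hlamdef
  have hlampos : ∀ n, 0 < lam n := fun n => by positivity
  set f : ℕ → Ω → ℝ := fun n ω => (1 - exp (-(lam n) * ξ ω)) / lam n with hfdef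
  have hint : ∀ n, Integrable (f n) P := fun n =>
    ((integrable_const (1:ℝ)).sub (hF (lam n) (hlampos n).le)).div_const _
  have hmono : ∀ ω, Monotone fun n => f n ω := by
    intro ω n m hnm
    refine aux_mono (ξ ω) (lam m) (lam n) (hlampos m) ?_
    have h1 : (n:ℝ) + 1 ≤ (m:ℝ) + 1 := by
      have : (n:ℝ) ≤ m := Nat.cast_le.mpr hnm
      linarith
    exact inv_anti₀ (by positivity) h1
  have htends : ∀ ω, Tendsto (fun n => f n ω) atTop (nhds (ξ ω)) := fun ω =>
    aux_tendsto (ξ ω)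
  -- integrals of f n tend to 0
  have hIeq : ∀ n, ∫ ω, f n ω ∂P
      = (1 - ∫ ω, exp (-(lam n) * ξ ω) ∂P) / lam n := by
    intro n
    rw [hfdef]
    simp only
    rw [integral_div, integral_sub (integrable_const 1) (hF (lam n) (hlampos n).le),
      integral_const]
    simp
  have hseq' : Tendsto lam atTop (nhdsWithin 0 (Set.Ioi 0)) := by
    refine tendsto_nhdsWithin_of_tendsto_nhds_of_eventually_within _ ?_ ?_
    · exact tendsto_one_div_add_atTop_nhds_zero_nat.congr (by intro n; rw [one_div])
    · exact Eventually.of_forall fun n => hlampos n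
  have hIto : Tendsto (fun n => ∫ ω, f n ω ∂P) atTop (nhds 0) := by
    have h0 := hlittle.tendsto_div_nhds_zero
    have h1 := (h0.comp hseq').neg
    rw [neg_zero] at h1
    refine h1.congr fun n => ?_
    rw [hIeq n]
    simp only [Function.comp_apply]
    rw [← neg_div, neg_sub]
  -- integrability of ξ
  have hf0le : ∀ ω, f 0 ω ≤ ξ ω := fun ω =>
    ge_of_tendsto' (htends ω) fun n => hmono ω (Nat.zero_le n)
  set g : Ω → ℝ := fun ω => ξ ω - f 0 ω with hgdef
  have hgnonneg : ∀ ω, 0 ≤ g ω := fun ω => sub_nonneg.2 (hf0le ω)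
  have hmct := lintegral_tendsto_of_tendsto_of_monotone
    (f := fun n ω => ENNReal.ofReal (f n ω - f 0 ω))
    (F := fun ω => ENNReal.ofReal (g ω)) (μ := P)
    (fun n => ((hint n).sub (hint 0)).1.aemeasurable.ennreal_ofReal)
    (Eventually.of_forall fun ω n m hnm =>
      ENNReal.ofReal_le_ofReal (by have := hmono ω hnm; linarith))
    (Eventually.of_forall fun ω =>
      (ENNReal.continuous_ofReal.tendsto _).comp ((htends ω).sub_const _))
  have heq : ∀ n, ∫⁻ ω, ENNReal.ofReal (f n ω - f 0 ω) ∂P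
      = ENNReal.ofReal ((∫ ω, f n ω ∂P) - ∫ ω, f 0 ω ∂P) := by
    intro n
    have h4 := ofReal_integral_eq_lintegral_ofReal ((hint n).sub (hint 0))
      (Eventually.of_forall fun ω => by have := hmono ω (Nat.zero_le n); simp; linarith)
    simp only [Pi.sub_apply] at h4
    rw [← h4, integral_sub (hint n) (hint 0)]
  have h2 : Tendsto (fun n => ∫⁻ ω, ENNReal.ofReal (f n ω - f 0 ω) ∂P) atTop
      (nhds (ENNReal.ofReal (0 - ∫ ω, f 0 ω ∂P))) := by
    simp_rw [heq]
    exact (ENNReal.continuous_ofReal.tendsto _).comp (hIto.sub_const _)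
  have hlint : ∫⁻ ω, ENNReal.ofReal (g ω) ∂P = ENNReal.ofReal (0 - ∫ ω, f 0 ω ∂P) :=
    tendsto_nhds_unique hmct h2
  have hgint : Integrable g P := by
    refine ⟨(hmeas.aestronglyMeasurable.sub (hint 0).1), ?_⟩
    rw [hasFiniteIntegral_iff_ofReal (Eventually.of_forall hgnonneg), hlint]
    exact ENNReal.ofReal_lt_top
  have hξint : Integrable ξ P := by
    have h3 := hgint.add (hint 0)
    refine h3.congr (Eventually.of_forall fun ω => ?_)
    simp [hgdef]
  refine ⟨hξint, ?_⟩
  have hlim := integral_tendsto_of_tendsto_of_monotone hint hξint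
    (Eventually.of_forall hmono) (Eventually.of_forall htends)
  exact tendsto_nhds_unique hlim hIto
end

section
/- Let ψ : (0,∞) → [0,∞) be nondecreasing, let λ_n = (log n)⁴/n² for integers n ≥ 2, and suppose that n·ψ(λ_n·t) → K·√t as n → ∞ for every fixed t > 0, where K > 0 is a constant. Then ψ(λ) ~ 4K·√λ/(log(1/λ))² as λ → 0⁺. Equivalently, ψ(λ)·(log λ)²/√λ → 4K as λ → 0⁺. -/
open Real Filter

noncomputable def lamSeq (n : ℕ) : ℝ := (Real.log n)^4 / (n:ℝ)^2

lemma lamSeq_pos {n : ℕ} (hn : 2 ≤ n) : 0 < lamSeq n := by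
  have h1 : (1:ℝ) < n := by exact_mod_cast Nat.lt_of_lt_of_le one_lt_two hn
  have hl : 0 < Real.log n := Real.log_pos h1
  have : (0:ℝ) < (n:ℝ)^2 := by positivity
  exact div_pos (by positivity) this

lemma sqrt_lamSeq {n : ℕ} (hn : 1 ≤ n) : Real.sqrt (lamSeq n) = (Real.log n)^2 / n := by
  have h0 : (0:ℝ) < n := by exact_mod_cast hn
  have : lamSeq n = ((Real.log n)^2 / n)^2 := by
    unfold lamSeq; ring
  rw [this, Real.sqrt_sq (by positivity)]

lemma gfun_anti {x y : ℝ} (hx : 0 < x) (hxy : x ≤ y) (hy : y < 1) :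
    (Real.log y)^2 / Real.sqrt y ≤ (Real.log x)^2 / Real.sqrt x := by
  have hly : Real.log y ≤ 0 := Real.log_nonpos (le_of_lt (lt_of_lt_of_le hx hxy)) hy.le
  have hlx : Real.log x ≤ Real.log y := Real.log_le_log hx hxy
  have hsq : (Real.log y)^2 ≤ (Real.log x)^2 := by
    have h1 : -Real.log y ≤ -Real.log x := by linarith
    have h2 : 0 ≤ -Real.log y := by linarith
    calc (Real.log y)^2 = (-Real.log y)^2 := by ring
      _ ≤ (-Real.log x)^2 := by exact pow_le_pow_left₀ h2 h1 2
      _ = (Real.log x)^2 := by ring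
  exact div_le_div₀ (sq_nonneg _) hsq (Real.sqrt_pos.mpr hx) (Real.sqrt_le_sqrt hxy)

lemma tendsto_lamSeq : Tendsto lamSeq atTop (nhds 0) := by
  have h := Real.tendsto_pow_log_div_mul_add_atTop 1 0 4 one_ne_zero
  have h2 : Tendsto (fun n : ℕ => ((n:ℝ)^2)) atTop atTop :=
    (tendsto_pow_atTop two_ne_zero).comp tendsto_natCast_atTop_atTop
  have h3 := h.comp h2
  have h4 := h3.const_mul (1/16 : ℝ)
  rw [mul_zero] at h4
  refine h4.congr' ?_
  filter_upwards [eventually_ge_atTop 1] with n hn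
  have h0 : (0:ℝ) < n := by exact_mod_cast hn
  have : Real.log ((n:ℝ)^2) = 2 * Real.log n := by
    rw [show ((n:ℝ)^2) = (n:ℝ)*(n:ℝ) by ring, Real.log_mul (ne_of_gt h0) (ne_of_gt h0)]; ring
  simp only [Function.comp, this]
  unfold lamSeq
  ring

lemma tendsto_log_lamSeq_div :
    Tendsto (fun n : ℕ => Real.log (lamSeq n) / Real.log n) atTop (nhds (-2)) := by
  have hll : Tendsto (fun n : ℕ => Real.log (Real.log n) / Real.log n) atTop (nhds 0) := by
    have h := Real.tendsto_pow_log_div_mul_add_atTop 1 0 1 one_ne_zero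
    have h2 : Tendsto (fun n : ℕ => Real.log n) atTop atTop :=
      Real.tendsto_log_atTop.comp tendsto_natCast_atTop_atTop
    have h3 := h.comp h2
    refine h3.congr ?_
    intro n
    simp [Function.comp]
  have h4 := (hll.const_mul (4:ℝ)).sub_const 2
  rw [mul_zero, zero_sub] at h4
  refine h4.congr' ?_
  filter_upwards [eventually_ge_atTop 2] with n hn
  have h1 : (1:ℝ) < n := by exact_mod_cast Nat.lt_of_lt_of_le one_lt_two hn
  have hl : 0 < Real.log n := Real.log_pos h1
  have h0 : (0:ℝ) < n := lt_trans one_pos h1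
  have hlog : Real.log (lamSeq n) = 4 * Real.log (Real.log n) - 2 * Real.log n := by
    unfold lamSeq
    rw [Real.log_div (by positivity) (by positivity), Real.log_pow, Real.log_pow]
    push_cast; ring
  rw [hlog]
  field_simp

lemma tendsto_sq_log_lamSeq :
    Tendsto (fun n : ℕ => (Real.log (lamSeq n) / Real.log n)^2) atTop (nhds 4) := by
  have := tendsto_log_lamSeq_div.pow 2
  norm_num at this
  exact this

/-- Monotone interpolation: if ψ ≥ 0 is nondecreasing on (0,∞),
λ_n = (log n)⁴/n², and n·ψ(λ_n t) → K√t for each t > 0 with K > 0, then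
ψ(λ)(log λ)²/√λ → 4K as λ → 0⁺. -/
theorem stmt_19 (ψ : ℝ → ℝ) (K : ℝ) (hK : 0 < K)
    (hnonneg : ∀ x : ℝ, 0 < x → 0 ≤ ψ x)
    (hmono : ∀ x y : ℝ, 0 < x → x ≤ y → ψ x ≤ ψ y)
    (hseq : ∀ t : ℝ, 0 < t →
      Filter.Tendsto
        (fun n : ℕ => (n:ℝ) * ψ ((Real.log n)^4 / (n:ℝ)^2 * t))
        Filter.atTop (nhds (K * Real.sqrt t))) :
    Filter.Tendsto (fun lam : ℝ => ψ lam * (Real.log lam)^2 / Real.sqrt lam)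
      (nhdsWithin 0 (Set.Ioi 0)) (nhds (4 * K)) := by
  classical
  -- basic sequence limit
  have hψ1 : Tendsto (fun n : ℕ => (n:ℝ) * ψ (lamSeq n)) atTop (nhds K) := by
    have := hseq 1 one_pos
    simp only [mul_one, Real.sqrt_one] at this
    exact this.congr (fun n => by rw [lamSeq])
  have hψ2 : Tendsto (fun n : ℕ => ((n+1 : ℕ):ℝ) * ψ (lamSeq (n+1))) atTop (nhds K) :=
    hψ1.comp (tendsto_add_atTop_nat 1)
  have hrat1 : Tendsto (fun n : ℕ => (n:ℝ) / ((n:ℝ)+1)) atTop (nhds 1) :=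
    tendsto_natCast_div_add_atTop (1:ℝ)
  have hrat2 : Tendsto (fun n : ℕ => ((n:ℝ)+1) / (n:ℝ)) atTop (nhds 1) := by
    have := hrat1.inv₀ one_ne_zero
    simp only [inv_div, inv_one] at this
    exact this
  have hsqshift : Tendsto (fun n : ℕ => (Real.log (lamSeq (n+1)) / Real.log (n+1))^2)
      atTop (nhds 4) := by
    have := tendsto_sq_log_lamSeq.comp (tendsto_add_atTop_nat 1)
    exact this.congr (fun n => by push_cast [Function.comp]; norm_num)
  -- lower sequence a_n = ψ(λ_{n+1}) * g(λ_n)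
  have ha : Tendsto (fun n : ℕ => ψ (lamSeq (n+1)) * ((Real.log (lamSeq n))^2 / Real.sqrt (lamSeq n)))
      atTop (nhds (4 * K)) := by
    have h := hψ2.mul (hrat1.mul tendsto_sq_log_lamSeq)
    have h2 : K * (1 * 4) = 4 * K := by ring
    rw [h2] at h
    refine h.congr' ?_
    filter_upwards [eventually_ge_atTop 2] with n hn
    have h1 : (1:ℝ) < n := by exact_mod_cast Nat.lt_of_lt_of_le one_lt_two hn
    have hl : 0 < Real.log n := Real.log_pos h1
    have h0 : (0:ℝ) < n := lt_trans one_pos h1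
    rw [sqrt_lamSeq (le_trans (by norm_num) hn)]
    push_cast
    field_simp
  -- upper sequence b_n = ψ(λ_n) * g(λ_{n+1})
  have hb : Tendsto (fun n : ℕ => ψ (lamSeq n) * ((Real.log (lamSeq (n+1)))^2 / Real.sqrt (lamSeq (n+1))))
      atTop (nhds (4 * K)) := by
    have h := hψ1.mul (hrat2.mul hsqshift)
    have h2 : K * (1 * 4) = 4 * K := by ring
    rw [h2] at h
    refine h.congr' ?_
    filter_upwards [eventually_ge_atTop 2] with n hn
    have h1 : (1:ℝ) < n := by exact_mod_cast Nat.lt_of_lt_of_le one_lt_two hn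
    have hl1 : 0 < Real.log ((n:ℝ)+1) := Real.log_pos (by linarith)
    have h0 : (0:ℝ) < n := lt_trans one_pos h1
    rw [sqrt_lamSeq (show 1 ≤ n+1 by omega)]
    push_cast
    field_simp
  -- epsilon-delta
  rw [Metric.tendsto_nhdsWithin_nhds]
  intro ε hε
  have hev : ∀ᶠ n : ℕ in atTop, 2 ≤ n ∧ lamSeq n < 1 ∧
      |ψ (lamSeq (n+1)) * ((Real.log (lamSeq n))^2 / Real.sqrt (lamSeq n)) - 4 * K| < ε ∧
      |ψ (lamSeq n) * ((Real.log (lamSeq (n+1)))^2 / Real.sqrt (lamSeq (n+1))) - 4 * K| < ε := by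
    have e1 : ∀ᶠ n : ℕ in atTop, lamSeq n < 1 := by
      have := tendsto_lamSeq.eventually (eventually_lt_nhds one_pos)
      simpa using this
    have e2 := (ha.eventually (Metric.ball_mem_nhds (4*K) hε))
    have e3 := (hb.eventually (Metric.ball_mem_nhds (4*K) hε))
    simp only [Metric.mem_ball, Real.dist_eq] at e2 e3
    filter_upwards [eventually_ge_atTop 2, e1, e2, e3] with n h1 h2 h3 h4
    exact ⟨h1, h2, h3, h4⟩
  obtain ⟨N, hN⟩ := eventually_atTop.mp hev
  have hN2 : 2 ≤ N := (hN N le_rfl).1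
  have hδ : 0 < lamSeq N := lamSeq_pos hN2
  refine ⟨lamSeq N, hδ, ?_⟩
  intro lam hlam hdist
  rw [Real.dist_eq, sub_zero] at hdist
  have hlam0 : 0 < lam := hlam
  have hlamN : lam < lamSeq N := lt_of_abs_lt hdist
  -- find the bracketing index
  have hexists : ∃ k : ℕ, lamSeq (N + 1 + k) ≤ lam := by
    have hev2 : ∀ᶠ m : ℕ in atTop, lamSeq m < lam :=
      tendsto_lamSeq.eventually (eventually_lt_nhds hlam0)
    obtain ⟨M, hM⟩ := eventually_atTop.mp hev2
    exact ⟨M + N + 1, le_of_lt (hM (N + 1 + (M + N + 1)) (by omega))⟩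
  set k := Nat.find hexists with hk
  set n := N + k with hn
  have hub : lamSeq (n + 1) ≤ lam := by
    have := Nat.find_spec hexists
    rw [← hk, show N + 1 + k = n + 1 by omega] at this
    exact this
  have hlb : lam < lamSeq n := by
    rcases Nat.eq_zero_or_pos k with h | h
    · simpa [hn, h] using hlamN
    · have := Nat.find_min hexists (show k - 1 < k by omega)
      have heq : N + 1 + (k - 1) = n := by omega
      rw [heq] at this
      exact lt_of_not_ge this
  have hnN : N ≤ n := by omega
  obtain ⟨-, hlt1, haε, hbε⟩ := hN n hnN
  have hn2 : 2 ≤ n := le_trans hN2 hnN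
  have hpos_next : 0 < lamSeq (n+1) := lamSeq_pos (by omega)
  -- monotonicity bounds
  have hψlow : ψ (lamSeq (n+1)) ≤ ψ lam := hmono _ _ hpos_next hub
  have hψhigh : ψ lam ≤ ψ (lamSeq n) := hmono _ _ hlam0 hlb.le
  have hglow : (Real.log (lamSeq n))^2 / Real.sqrt (lamSeq n)
      ≤ (Real.log lam)^2 / Real.sqrt lam := gfun_anti hlam0 hlb.le hlt1
  have hlam1 : lam < 1 := lt_trans hlamN ((hN N le_rfl).2.1)
  have hghigh : (Real.log lam)^2 / Real.sqrt lam
      ≤ (Real.log (lamSeq (n+1)))^2 / Real.sqrt (lamSeq (n+1)) :=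
    gfun_anti hpos_next hub hlam1
  have hgnn : 0 ≤ (Real.log (lamSeq n))^2 / Real.sqrt (lamSeq n) := by positivity
  have hglamnn : 0 ≤ (Real.log lam)^2 / Real.sqrt lam := by positivity
  have hflow : ψ (lamSeq (n+1)) * ((Real.log (lamSeq n))^2 / Real.sqrt (lamSeq n))
      ≤ ψ lam * ((Real.log lam)^2 / Real.sqrt lam) :=
    mul_le_mul hψlow hglow hgnn (hnonneg _ hlam0)
  have hfhigh : ψ lam * ((Real.log lam)^2 / Real.sqrt lam)
      ≤ ψ (lamSeq n) * ((Real.log (lamSeq (n+1)))^2 / Real.sqrt (lamSeq (n+1))) :=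
    mul_le_mul hψhigh hghigh hglamnn (hnonneg _ (lamSeq_pos hn2))
  rw [Real.dist_eq]
  have heq : ψ lam * (Real.log lam)^2 / Real.sqrt lam
      = ψ lam * ((Real.log lam)^2 / Real.sqrt lam) := by rw [mul_div_assoc]
  rw [heq, abs_lt]
  have haε' := abs_lt.mp haε
  have hbε' := abs_lt.mp hbε
  constructor <;> linarith
end
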